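/- arXiv:2312.15192 — 6 statements merged into one kernel-verified Lean document; each statement's English description precedes it below -/
import Mathlib

section
/- Let f be the generalized affine FIF satisfying f(x,y) = S(x,y)·f(L_w^{-1}(x,y)) + q(x,y) for (x,y) ∈ D_w, where S, q are continuous on D and M_f = sup_D |f|. Then for any w ∈ Σ and any subset E ⊂ D_w: O(f,E) ≤ sup_{t∈E}|S(t)| · O(f, L_w^{-1}(E)) + 2 M_f · O(S,E) + O(q,E). -/
open scoped BigOperators

noncomputable def oscil (φ : ℝ × ℝ → ℝ) (E : Set (ℝ × ℝ)) : ℝ :=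
  sSup ((fun p : (ℝ × ℝ) × (ℝ × ℝ) => φ p.1 - φ p.2) '' (E ×ˢ E))

noncomputable def eudist (s t : ℝ × ℝ) : ℝ :=
  Real.sqrt ((s.1 - t.1) ^ 2 + (s.2 - t.2) ^ 2)

noncomputable def uMap (x0 len : ℝ) (N : ℕ) (i : Fin N) (x : ℝ) : ℝ :=
  if i.val % 2 = 0 then x0 + i.val * (len / N) + (x - x0) / N
  else x0 + (i.val + 1) * (len / N) - (x - x0) / N

noncomputable def uInv (x0 len : ℝ) (N : ℕ) (i : Fin N) (y : ℝ) : ℝ :=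
  if i.val % 2 = 0 then x0 + N * (y - (x0 + i.val * (len / N)))
  else x0 + N * ((x0 + (i.val + 1) * (len / N)) - y)

noncomputable def Lmap (x0 y0 len : ℝ) (N : ℕ) (w : Fin N × Fin N) (t : ℝ × ℝ) : ℝ × ℝ :=
  (uMap x0 len N w.1 t.1, uMap y0 len N w.2 t.2)

noncomputable def LInv (x0 y0 len : ℝ) (N : ℕ) (w : Fin N × Fin N) (t : ℝ × ℝ) : ℝ × ℝ :=
  (uInv x0 len N w.1 t.1, uInv y0 len N w.2 t.2)

noncomputable def sqD (x0 y0 len : ℝ) : Set (ℝ × ℝ) :=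
  Set.Icc x0 (x0 + len) ×ˢ Set.Icc y0 (y0 + len)

noncomputable def cell (x0 y0 len : ℝ) (N : ℕ) : List (Fin N × Fin N) → Set (ℝ × ℝ)
  | [] => sqD x0 y0 len
  | w :: ws => Lmap x0 y0 len N w '' cell x0 y0 len N ws

noncomputable def oscSum (x0 y0 len : ℝ) (N : ℕ) (φ : ℝ × ℝ → ℝ)
    (p : List (Fin N × Fin N)) (k : ℕ) : ℝ :=
  ∑ w : Fin k → Fin N × Fin N, oscil φ (cell x0 y0 len N (p ++ List.ofFn w))

noncomputable def supAbs (S : ℝ × ℝ → ℝ) (E : Set (ℝ × ℝ)) : ℝ :=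
  sSup ((fun t => |S t|) '' E)

noncomputable def infAbs (S : ℝ × ℝ → ℝ) (E : Set (ℝ × ℝ)) : ℝ :=
  sInf ((fun t => |S t|) '' E)

lemma uMap_mem_aux (x0 len : ℝ) (hlen : 0 < len) (N : ℕ) (hN0 : 0 < N) (i : Fin N)
    {x : ℝ} (hx : x ∈ Set.Icc x0 (x0 + len)) :
    uMap x0 len N i x ∈ Set.Icc x0 (x0 + len) := by
  obtain ⟨hx1, hx2⟩ := hx
  have hNpos : (0:ℝ) < N := by exact_mod_cast hN0
  have hi0 : (0:ℝ) ≤ (i.val : ℝ) := by positivity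
  have hi1 : (i.val : ℝ) + 1 ≤ (N : ℝ) := by exact_mod_cast i.isLt
  have hu : (N:ℝ) * (len / N) = len := by field_simp
  have hv0 : (0:ℝ) ≤ (x - x0) / N := div_nonneg (by linarith) hNpos.le
  have hv1 : (x - x0) / N ≤ len / N := (div_le_div_iff_of_pos_right hNpos).mpr (by linarith)
  have hup : (0:ℝ) < len / N := by positivity
  unfold uMap
  split_ifs <;> constructor <;> nlinarith

lemma uInv_uMap_aux (x0 len : ℝ) (N : ℕ) (hN0 : 0 < N) (i : Fin N) (x : ℝ) :
    uInv x0 len N i (uMap x0 len N i x) = x := by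
  have hN : (N:ℝ) ≠ 0 := by positivity
  unfold uInv uMap
  split_ifs <;> field_simp <;> ring

/-- oscillation passing inequality (upper). -/
theorem osc_passing_upper (x0 y0 len : ℝ) (hlen : 0 < len) (N : ℕ) (hN : 2 ≤ N)
    (f S q : ℝ × ℝ → ℝ)
    (hf : ContinuousOn f (sqD x0 y0 len)) (hS : ContinuousOn S (sqD x0 y0 len))
    (hq : ContinuousOn q (sqD x0 y0 len))
    (hself : ∀ w : Fin N × Fin N, ∀ t ∈ cell x0 y0 len N [w],
      f t = S t * f (LInv x0 y0 len N w t) + q t) :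
    ∀ w : Fin N × Fin N, ∀ E ⊆ cell x0 y0 len N [w],
      oscil f E ≤ supAbs S E * oscil f (LInv x0 y0 len N w '' E)
        + 2 * supAbs f (sqD x0 y0 len) * oscil S E + oscil q E := by
  intro w E hE
  have hN0 : 0 < N := by omega
  set D := sqD x0 y0 len with hDdef
  -- empty case
  rcases E.eq_empty_or_nonempty with rfl | hEne
  · simp [oscil, supAbs, Real.sSup_empty]
  -- compactness and bounds
  have hDc : IsCompact D := by
    rw [hDdef]; exact (isCompact_Icc).prod isCompact_Icc
  obtain ⟨Mf, hMf⟩ := hDc.exists_bound_of_continuousOn hf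
  obtain ⟨MS, hMS⟩ := hDc.exists_bound_of_continuousOn hS
  obtain ⟨Mq, hMq⟩ := hDc.exists_bound_of_continuousOn hq
  simp only [Real.norm_eq_abs] at hMf hMS hMq
  -- cell [w] = Lmap '' D
  have hcell : cell x0 y0 len N [w] = Lmap x0 y0 len N w '' D := by
    simp [cell]; rfl
  have hmapD : ∀ t ∈ D, Lmap x0 y0 len N w t ∈ D := by
    rintro ⟨a, b⟩ ⟨ha, hb⟩
    exact ⟨uMap_mem_aux x0 len hlen N hN0 w.1 ha, uMap_mem_aux y0 len hlen N hN0 w.2 hb⟩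
  have hED : E ⊆ D := by
    intro t ht
    obtain ⟨s, hs, rfl⟩ := hcell ▸ hE ht
    exact hmapD s hs
  have hLinv : ∀ t ∈ E, LInv x0 y0 len N w t ∈ D := by
    intro t ht
    obtain ⟨s, hs, rfl⟩ := hcell ▸ hE ht
    have : LInv x0 y0 len N w (Lmap x0 y0 len N w s) = s := by
      unfold LInv Lmap
      simp [uInv_uMap_aux _ _ _ hN0]
    rw [this]; exact hs
  have hFD : LInv x0 y0 len N w '' E ⊆ D := by
    rintro _ ⟨t, ht, rfl⟩; exact hLinv t ht
  -- generic oscillation facts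
  have oscBdd : ∀ (φ : ℝ × ℝ → ℝ) (M : ℝ), (∀ t ∈ D, |φ t| ≤ M) → ∀ F ⊆ D,
      BddAbove ((fun p : (ℝ × ℝ) × (ℝ × ℝ) => φ p.1 - φ p.2) '' (F ×ˢ F)) := by
    rintro φ M hM F hF
    refine ⟨2 * M, ?_⟩
    rintro _ ⟨⟨a, b⟩, ⟨ha, hb⟩, rfl⟩
    have h1 := hM a (hF ha)
    have h2 := hM b (hF hb)
    have := abs_le.mp h1
    have := abs_le.mp h2
    simp only
    linarith [(abs_le.mp h1).1, (abs_le.mp h1).2, (abs_le.mp h2).1, (abs_le.mp h2).2]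
  have le_oscil : ∀ (φ : ℝ × ℝ → ℝ) (M : ℝ), (∀ t ∈ D, |φ t| ≤ M) → ∀ F, F ⊆ D →
      ∀ a ∈ F, ∀ b ∈ F, φ a - φ b ≤ oscil φ F := by
    intro φ M hM F hF a ha b hb
    exact le_csSup (oscBdd φ M hM F hF) ⟨(a, b), ⟨ha, hb⟩, rfl⟩
  have abs_le_oscil : ∀ (φ : ℝ × ℝ → ℝ) (M : ℝ), (∀ t ∈ D, |φ t| ≤ M) → ∀ F, F ⊆ D →
      ∀ a ∈ F, ∀ b ∈ F, |φ a - φ b| ≤ oscil φ F := by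
    intro φ M hM F hF a ha b hb
    refine abs_le.mpr ⟨?_, le_oscil φ M hM F hF a ha b hb⟩
    have := le_oscil φ M hM F hF b hb a ha
    linarith
  have oscil_nonneg : ∀ (φ : ℝ × ℝ → ℝ) (M : ℝ), (∀ t ∈ D, |φ t| ≤ M) → ∀ F, F ⊆ D →
      F.Nonempty → 0 ≤ oscil φ F := by
    intro φ M hM F hF ⟨t, ht⟩
    have := le_oscil φ M hM F hF t ht t ht
    linarith
  -- supAbs facts
  have hDne : D.Nonempty := ⟨(x0, y0), by
    constructor <;> exact ⟨le_refl _, by linarith⟩⟩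
  have supAbsBdd : ∀ (φ : ℝ × ℝ → ℝ) (M : ℝ), (∀ t ∈ D, |φ t| ≤ M) → ∀ F, F ⊆ D →
      BddAbove ((fun t => |φ t|) '' F) := by
    rintro φ M hM F hF
    exact ⟨M, by rintro _ ⟨t, ht, rfl⟩; exact hM t (hF ht)⟩
  have le_supAbs : ∀ (φ : ℝ × ℝ → ℝ) (M : ℝ), (∀ t ∈ D, |φ t| ≤ M) → ∀ F, F ⊆ D →
      ∀ t ∈ F, |φ t| ≤ supAbs φ F := by
    intro φ M hM F hF t ht
    exact le_csSup (supAbsBdd φ M hM F hF) ⟨t, ht, rfl⟩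
  have hsupS0 : 0 ≤ supAbs S E := by
    obtain ⟨t, ht⟩ := hEne
    exact le_trans (abs_nonneg _) (le_supAbs S MS hMS E hED t ht)
  have hMf0 : 0 ≤ supAbs f D := by
    obtain ⟨t, ht⟩ := hDne
    exact le_trans (abs_nonneg _) (le_supAbs f Mf hMf D (le_refl _) t ht)
  have hFne : (LInv x0 y0 len N w '' E).Nonempty := hEne.image _
  have hoscF0 : 0 ≤ oscil f (LInv x0 y0 len N w '' E) :=
    oscil_nonneg f Mf hMf _ hFD hFne
  have hoscS0 : 0 ≤ oscil S E := oscil_nonneg S MS hMS E hED hEne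
  have hoscq0 : 0 ≤ oscil q E := oscil_nonneg q Mq hMq E hED hEne
  -- main bound
  rw [oscil]
  apply Real.sSup_le
  · rintro _ ⟨⟨a, b⟩, ⟨ha, hb⟩, rfl⟩
    simp only
    have hfa := hself w a (hE ha)
    have hfb := hself w b (hE hb)
    set a' := LInv x0 y0 len N w a with ha'
    set b' := LInv x0 y0 len N w b with hb'
    have ha'F : a' ∈ LInv x0 y0 len N w '' E := ⟨a, ha, rfl⟩
    have hb'F : b' ∈ LInv x0 y0 len N w '' E := ⟨b, hb, rfl⟩
    have key : f a - f b = S a * (f a' - f b') + (S a - S b) * f b' + (q a - q b) := by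
      rw [hfa, hfb]; ring
    have t1 : S a * (f a' - f b') ≤ supAbs S E * oscil f (LInv x0 y0 len N w '' E) := by
      calc S a * (f a' - f b') ≤ |S a * (f a' - f b')| := le_abs_self _
        _ = |S a| * |f a' - f b'| := abs_mul _ _
        _ ≤ supAbs S E * oscil f (LInv x0 y0 len N w '' E) :=
          mul_le_mul (le_supAbs S MS hMS E hED a ha)
            (abs_le_oscil f Mf hMf _ hFD a' ha'F b' hb'F) (abs_nonneg _) hsupS0
    have t2 : (S a - S b) * f b' ≤ supAbs f D * oscil S E := by
      calc (S a - S b) * f b' ≤ |(S a - S b) * f b'| := le_abs_self _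
        _ = |S a - S b| * |f b'| := abs_mul _ _
        _ ≤ oscil S E * supAbs f D :=
          mul_le_mul (abs_le_oscil S MS hMS E hED a ha b hb)
            (le_supAbs f Mf hMf D (le_refl _) b' (hLinv b hb)) (abs_nonneg _) hoscS0
        _ = supAbs f D * oscil S E := mul_comm _ _
    have t3 : q a - q b ≤ oscil q E := le_oscil q Mq hMq E hED a ha b hb
    have t2' : supAbs f D * oscil S E ≤ 2 * supAbs f D * oscil S E := by nlinarith
    linarith [key.le, key.ge]
  · positivity
end

section
/- With the same hypotheses, for any w ∈ Σ and E ⊂ D_w: O(f,E) ≥ inf_{t∈E}|S(t)| · O(f, L_w^{-1}(E)) − 2 M_f · O(S,E) − O(q,E). -/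
open scoped BigOperators

lemma uMap_maps (x0 len : ℝ) (hlen : 0 ≤ len) (N : ℕ) (hN : 0 < N) (i : Fin N) {x : ℝ}
    (hx : x ∈ Set.Icc x0 (x0 + len)) : uMap x0 len N i x ∈ Set.Icc x0 (x0 + len) := by
  obtain ⟨hx1, hx2⟩ := hx
  have hNR : (0:ℝ) < N := by exact_mod_cast hN
  have hi1 : (i:ℝ) + 1 ≤ N := by exact_mod_cast Nat.succ_le_of_lt i.isLt
  have hi0 : (0:ℝ) ≤ i := Nat.cast_nonneg _
  have hlenN : 0 ≤ len / N := div_nonneg hlen hNR.le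
  have hxx : 0 ≤ (x - x0) / N := div_nonneg (by linarith) hNR.le
  have hxl : (x - x0) / N ≤ len / N := by gcongr; linarith
  have hNlen : (N:ℝ) * (len / N) = len := by field_simp
  unfold uMap
  split_ifs <;> constructor <;> nlinarith [mul_le_mul_of_nonneg_right hi1 hlenN]

lemma uInv_uMap (x0 len : ℝ) (N : ℕ) (hN : 0 < N) (i : Fin N) (x : ℝ) :
    uInv x0 len N i (uMap x0 len N i x) = x := by
  have hNR : (N:ℝ) ≠ 0 := by positivity
  unfold uInv uMap
  split_ifs <;> field_simp <;> ring

lemma LInv_Lmap (x0 y0 len : ℝ) (N : ℕ) (hN : 0 < N) (w : Fin N × Fin N) (t : ℝ × ℝ) :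
    LInv x0 y0 len N w (Lmap x0 y0 len N w t) = t := by
  unfold LInv Lmap
  simp [uInv_uMap _ _ _ hN]

lemma Lmap_maps (x0 y0 len : ℝ) (hlen : 0 ≤ len) (N : ℕ) (hN : 0 < N) (w : Fin N × Fin N)
    {t : ℝ × ℝ} (ht : t ∈ sqD x0 y0 len) : Lmap x0 y0 len N w t ∈ sqD x0 y0 len := by
  exact ⟨uMap_maps x0 len hlen N hN w.1 ht.1, uMap_maps y0 len hlen N hN w.2 ht.2⟩

/-- oscillation passing inequality (lower). -/
theorem osc_passing_lower (x0 y0 len : ℝ) (hlen : 0 < len) (N : ℕ) (hN : 2 ≤ N)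
    (f S q : ℝ × ℝ → ℝ)
    (hf : ContinuousOn f (sqD x0 y0 len)) (hS : ContinuousOn S (sqD x0 y0 len))
    (hq : ContinuousOn q (sqD x0 y0 len))
    (hself : ∀ w : Fin N × Fin N, ∀ t ∈ cell x0 y0 len N [w],
      f t = S t * f (LInv x0 y0 len N w t) + q t) :
    ∀ w : Fin N × Fin N, ∀ E ⊆ cell x0 y0 len N [w],
      oscil f E ≥ infAbs S E * oscil f (LInv x0 y0 len N w '' E)
        - 2 * supAbs f (sqD x0 y0 len) * oscil S E - oscil q E := by
  intro w E hE
  have hN0 : 0 < N := by omega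
  set D := sqD x0 y0 len with hD
  have hcellD : cell x0 y0 len N [w] = Lmap x0 y0 len N w '' D := rfl
  -- E empty case
  rcases E.eq_empty_or_nonempty with rfl | ⟨t0, ht0⟩
  · simp [oscil, infAbs, Real.sSup_empty, Real.sInf_empty]
  -- E ⊆ D and LInv '' E ⊆ D
  have hED : E ⊆ D := by
    intro t ht
    obtain ⟨s, hs, rfl⟩ := hE ht
    exact Lmap_maps x0 y0 len hlen.le N hN0 w hs
  have hLE : LInv x0 y0 len N w '' E ⊆ D := by
    rintro _ ⟨t, ht, rfl⟩
    obtain ⟨s, hs, rfl⟩ := hE ht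
    rw [LInv_Lmap x0 y0 len N hN0]
    exact hs
  -- bounds for f, S, q on D
  have hDcpt : IsCompact D := (isCompact_Icc.prod isCompact_Icc)
  obtain ⟨Mf, hMf⟩ := hDcpt.exists_bound_of_continuousOn hf
  obtain ⟨MS, hMS⟩ := hDcpt.exists_bound_of_continuousOn hS
  obtain ⟨Mq, hMq⟩ := hDcpt.exists_bound_of_continuousOn hq
  simp only [Real.norm_eq_abs] at hMf hMS hMq
  -- BddAbove facts
  have bddOsc : ∀ (φ : ℝ × ℝ → ℝ) (M : ℝ), (∀ t ∈ D, |φ t| ≤ M) → ∀ F ⊆ D,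
      BddAbove ((fun p : (ℝ × ℝ) × (ℝ × ℝ) => φ p.1 - φ p.2) '' (F ×ˢ F)) := by
    intro φ M hM F hF
    refine ⟨2 * M, ?_⟩
    rintro _ ⟨⟨p1, p2⟩, ⟨hp1, hp2⟩, rfl⟩
    have h1 := hM p1 (hF hp1)
    have h2 := hM p2 (hF hp2)
    have := abs_le.mp h1
    have := abs_le.mp h2
    simp only
    linarith [(abs_le.mp h1).1, (abs_le.mp h1).2, (abs_le.mp h2).1, (abs_le.mp h2).2]
  have oscMem : ∀ (φ : ℝ × ℝ → ℝ) (F : Set (ℝ × ℝ)), ∀ a ∈ F, ∀ b ∈ F,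
      φ a - φ b ∈ ((fun p : (ℝ × ℝ) × (ℝ × ℝ) => φ p.1 - φ p.2) '' (F ×ˢ F)) := by
    intro φ F a ha b hb
    exact ⟨(a, b), ⟨ha, hb⟩, rfl⟩
  have bddF := bddOsc f Mf hMf E hED
  have bddS := bddOsc S MS hMS E hED
  have bddQ := bddOsc q Mq hMq E hED
  -- nonnegativity of oscillations
  have hOf0 : 0 ≤ oscil f E := by
    have := le_csSup bddF (oscMem f E t0 ht0 t0 ht0)
    simpa [oscil] using this
  have hOS0 : 0 ≤ oscil S E := by
    have := le_csSup bddS (oscMem S E t0 ht0 t0 ht0)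
    simpa [oscil] using this
  have hOq0 : 0 ≤ oscil q E := by
    have := le_csSup bddQ (oscMem q E t0 ht0 t0 ht0)
    simpa [oscil] using this
  -- supAbs f D bounds
  have bddAf : BddAbove ((fun t => |f t|) '' D) := by
    refine ⟨Mf, ?_⟩; rintro _ ⟨t, ht, rfl⟩; exact hMf t ht
  have hMf0 : 0 ≤ supAbs f D := by
    have : |f t0| ∈ (fun t => |f t|) '' D := ⟨t0, hED ht0, rfl⟩
    exact le_trans (abs_nonneg _) (le_csSup bddAf this)
  have hfD : ∀ s ∈ D, |f s| ≤ supAbs f D := fun s hs => le_csSup bddAf ⟨s, hs, rfl⟩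
  -- infAbs facts
  have hinf0 : 0 ≤ infAbs S E := by
    apply Real.sInf_nonneg
    rintro _ ⟨t, ht, rfl⟩
    exact abs_nonneg _
  have hinfle : ∀ t ∈ E, infAbs S E ≤ |S t| := by
    intro t ht
    refine csInf_le ⟨0, ?_⟩ ⟨t, ht, rfl⟩
    rintro _ ⟨s, hs, rfl⟩
    exact abs_nonneg _
  -- key pointwise estimate
  have key : ∀ t' ∈ E, ∀ t'' ∈ E,
      |S t''| * (f (LInv x0 y0 len N w t') - f (LInv x0 y0 len N w t''))
        ≤ oscil f E + supAbs f D * oscil S E + oscil q E := by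
    intro t' ht' t'' ht''
    have h1 := hself w t' (hE ht')
    have h2 := hself w t'' (hE ht'')
    set A := f (LInv x0 y0 len N w t')
    set B := f (LInv x0 y0 len N w t'')
    have heq : S t'' * (A - B) = (f t' - f t'') - (S t' - S t'') * A - (q t' - q t'') := by
      rw [h1, h2]; ring
    have e1 : f t' - f t'' ≤ oscil f E := le_csSup bddF (oscMem f E t' ht' t'' ht'')
    have e2 : f t'' - f t' ≤ oscil f E := le_csSup bddF (oscMem f E t'' ht'' t' ht')
    have e3 : q t' - q t'' ≤ oscil q E := le_csSup bddQ (oscMem q E t' ht' t'' ht'')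
    have e4 : q t'' - q t' ≤ oscil q E := le_csSup bddQ (oscMem q E t'' ht'' t' ht')
    have eS : |S t' - S t''| ≤ oscil S E := abs_sub_le_iff.mpr
      ⟨le_csSup bddS (oscMem S E t' ht' t'' ht''), le_csSup bddS (oscMem S E t'' ht'' t' ht')⟩
    have eA : |A| ≤ supAbs f D := hfD _ (hLE ⟨t', ht', rfl⟩)
    have eSA : |(S t' - S t'') * A| ≤ oscil S E * supAbs f D := by
      rw [abs_mul]
      exact mul_le_mul eS eA (abs_nonneg _) hOS0
    obtain ⟨h5, h6⟩ := abs_le.mp eSA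
    rcases abs_cases (S t'') with ⟨habs, _⟩ | ⟨habs, _⟩ <;> rw [habs] <;> nlinarith
  -- conclude
  set T := ((fun p : (ℝ × ℝ) × (ℝ × ℝ) => f p.1 - f p.2) ''
    ((LInv x0 y0 len N w '' E) ×ˢ (LInv x0 y0 len N w '' E))) with hT
  have hC0 : 0 ≤ oscil f E + supAbs f D * oscil S E + oscil q E := by
    have := mul_nonneg hMf0 hOS0
    linarith
  have main : infAbs S E * oscil f (LInv x0 y0 len N w '' E)
      ≤ oscil f E + supAbs f D * oscil S E + oscil q E := by
    rcases eq_or_lt_of_le hinf0 with h0 | hpos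
    · rw [← h0, zero_mul]; exact hC0
    · have hsup : oscil f (LInv x0 y0 len N w '' E)
          ≤ (oscil f E + supAbs f D * oscil S E + oscil q E) / infAbs S E := by
        apply Real.sSup_le _ (div_nonneg hC0 hinf0)
        rintro _ ⟨⟨p1, p2⟩, ⟨⟨t', ht', rfl⟩, ⟨t'', ht'', rfl⟩⟩, rfl⟩
        show f (LInv x0 y0 len N w t') - f (LInv x0 y0 len N w t'')
          ≤ (oscil f E + supAbs f D * oscil S E + oscil q E) / infAbs S E
        rw [le_div_iff₀ hpos]
        have k := key t' ht' t'' ht''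
        rcases le_or_gt 0 (f (LInv x0 y0 len N w t') - f (LInv x0 y0 len N w t'')) with h | h
        · have h' := mul_le_mul_of_nonneg_left (hinfle t'' ht'') h
          nlinarith [h', k]
        · have h' := mul_nonpos_of_nonpos_of_nonneg h.le hinf0
          linarith [hC0, h']
      calc infAbs S E * oscil f (LInv x0 y0 len N w '' E)
          ≤ infAbs S E * ((oscil f E + supAbs f D * oscil S E + oscil q E) / infAbs S E) :=
            mul_le_mul_of_nonneg_left hsup hinf0
        _ = oscil f E + supAbs f D * oscil S E + oscil q E := by field_simp
  have h2Mf : supAbs f D * oscil S E ≤ 2 * supAbs f D * oscil S E := by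
    nlinarith
  linarith
end

section
/- Define the vertical scaling matrix M̄_n indexed by Σⁿ × Σⁿ by (M̄_n)_{𝐢,𝐣} = s̄_{𝐢 j_n} if σ(𝐢) = j₁⋯j_{n-1}, and 0 otherwise, and the oscillation vector V(f,n,k) with entries O_k(f, D_𝐣). Then for all n, k ∈ ℤ⁺, entrywise: M̲_n V(f,n,k-1) − N^k u_n ≤ V(f,n,k) ≤ M̄_n V(f,n,k-1) + N^k u_n, where u_n is the constant vector with all entries √2(2λ_S M_f + λ_q)N^{-n}|I|, and M̲_n is defined analogously with s̲ in place of s̄. -/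
open scoped BigOperators

open Classical in
noncomputable def upMat (x0 y0 len : ℝ) (N : ℕ) (S : ℝ × ℝ → ℝ) (m : ℕ) :
    Matrix (Fin (m + 1) → Fin N × Fin N) (Fin (m + 1) → Fin N × Fin N) ℝ :=
  fun i j =>
    if ∀ k : Fin m, i k.succ = j k.castSucc then
      supAbs S (cell x0 y0 len N (List.ofFn i ++ [j (Fin.last m)]))
    else 0

open Classical in
noncomputable def lowMat (x0 y0 len : ℝ) (N : ℕ) (S : ℝ × ℝ → ℝ) (m : ℕ) :
    Matrix (Fin (m + 1) → Fin N × Fin N) (Fin (m + 1) → Fin N × Fin N) ℝ :=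
  fun i j =>
    if ∀ k : Fin m, i k.succ = j k.castSucc then
      infAbs S (cell x0 y0 len N (List.ofFn i ++ [j (Fin.last m)]))
    else 0

lemma myUMap_mem {x0 len : ℝ} (hlen : 0 ≤ len) {N : ℕ} (hN : 0 < N) (i : Fin N)
    {x : ℝ} (hx : x ∈ Set.Icc x0 (x0 + len)) :
    uMap x0 len N i x ∈ Set.Icc x0 (x0 + len) := by
  obtain ⟨hx1, hx2⟩ := hx
  have hN' : (0:ℝ) < N := by exact_mod_cast hN
  have hi : (i.val : ℝ) + 1 ≤ N := by exact_mod_cast i.isLt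
  have hi0 : (0:ℝ) ≤ (i.val : ℝ) := by positivity
  have hd : (0:ℝ) ≤ len / N := by positivity
  have h1 : (0:ℝ) ≤ (x - x0) / N := div_nonneg (by linarith) hN'.le
  have h2 : (x - x0) / N ≤ len / N := by gcongr <;> linarith
  have hlenN : (N:ℝ) * (len / N) = len := by field_simp
  have h3 : ((i.val:ℝ) + 1) * (len / N) ≤ (N:ℝ) * (len / N) :=
    mul_le_mul_of_nonneg_right hi hd
  unfold uMap
  split_ifs <;> constructor <;> nlinarith [mul_nonneg hi0 hd]

lemma mySqD_nonempty {x0 y0 len : ℝ} (hlen : 0 ≤ len) : (sqD x0 y0 len).Nonempty :=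
  ⟨(x0, y0), ⟨⟨le_refl _, by linarith⟩, ⟨le_refl _, by linarith⟩⟩⟩

lemma myLmap_mem {x0 y0 len : ℝ} (hlen : 0 ≤ len) {N : ℕ} (hN : 0 < N) (w : Fin N × Fin N)
    {t : ℝ × ℝ} (ht : t ∈ sqD x0 y0 len) : Lmap x0 y0 len N w t ∈ sqD x0 y0 len :=
  ⟨myUMap_mem hlen hN w.1 ht.1, myUMap_mem hlen hN w.2 ht.2⟩

lemma myCell_subset_sqD {x0 y0 len : ℝ} (hlen : 0 ≤ len) {N : ℕ} (hN : 0 < N)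
    (p : List (Fin N × Fin N)) : cell x0 y0 len N p ⊆ sqD x0 y0 len := by
  induction p with
  | nil => exact fun t ht => ht
  | cons w ws ih =>
    intro t ht
    obtain ⟨u, hu, rfl⟩ := ht
    exact myLmap_mem hlen hN w (ih hu)

lemma myCell_nonempty {x0 y0 len : ℝ} (hlen : 0 ≤ len) {N : ℕ}
    (p : List (Fin N × Fin N)) : (cell x0 y0 len N p).Nonempty := by
  induction p with
  | nil => exact mySqD_nonempty hlen
  | cons w ws ih => exact ih.image _

lemma myCell_append_subset {x0 y0 len : ℝ} (hlen : 0 ≤ len) {N : ℕ} (hN : 0 < N)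
    (p q : List (Fin N × Fin N)) :
    cell x0 y0 len N (p ++ q) ⊆ cell x0 y0 len N p := by
  induction p with
  | nil => exact myCell_subset_sqD hlen hN q
  | cons w ws ih => exact Set.image_mono ih

lemma myUInv_uMap {x0 len : ℝ} {N : ℕ} (hN : 0 < N) (i : Fin N) (x : ℝ) :
    uInv x0 len N i (uMap x0 len N i x) = x := by
  have hN' : (N:ℝ) ≠ 0 := by positivity
  unfold uInv uMap
  split_ifs <;> field_simp <;> ring

lemma myLInv_Lmap {x0 y0 len : ℝ} {N : ℕ} (hN : 0 < N) (w : Fin N × Fin N) (t : ℝ × ℝ) :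
    LInv x0 y0 len N w (Lmap x0 y0 len N w t) = t := by
  unfold LInv Lmap
  simp [myUInv_uMap hN]

lemma myUMap_sub {x0 len : ℝ} {N : ℕ} (hN : 0 < N) (i : Fin N) (a b : ℝ) :
    |uMap x0 len N i a - uMap x0 len N i b| = |a - b| / N := by
  have hN' : (0:ℝ) < N := by exact_mod_cast hN
  unfold uMap
  split_ifs with h
  · rw [show x0 + i.val * (len / N) + (a - x0) / N - (x0 + i.val * (len / N) + (b - x0) / N)
      = (a - b) / N by ring, abs_div, abs_of_pos hN']
  · rw [show x0 + (i.val + 1) * (len / N) - (a - x0) / N - (x0 + (i.val + 1) * (len / N) - (b - x0) / N)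
      = -((a - b) / N) by ring, abs_neg, abs_div, abs_of_pos hN']

lemma myCell_dist {x0 y0 len : ℝ} (hlen : 0 ≤ len) {N : ℕ} (hN : 0 < N)
    (p : List (Fin N × Fin N)) {s t : ℝ × ℝ}
    (hs : s ∈ cell x0 y0 len N p) (ht : t ∈ cell x0 y0 len N p) :
    |s.1 - t.1| ≤ len / N ^ p.length ∧ |s.2 - t.2| ≤ len / N ^ p.length := by
  induction p generalizing s t with
  | nil =>
    obtain ⟨⟨a1, a2⟩, ⟨b1, b2⟩⟩ := hs
    obtain ⟨⟨c1, c2⟩, ⟨d1, d2⟩⟩ := ht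
    constructor <;> rw [abs_sub_le_iff] <;> constructor <;> simp <;> linarith
  | cons w ws ih =>
    obtain ⟨u, hu, rfl⟩ := hs
    obtain ⟨v, hv, rfl⟩ := ht
    obtain ⟨h1, h2⟩ := ih hu hv
    have hN' : (0:ℝ) < N := by exact_mod_cast hN
    constructor
    · rw [show (Lmap x0 y0 len N w u).1 = uMap x0 len N w.1 u.1 from rfl,
        show (Lmap x0 y0 len N w v).1 = uMap x0 len N w.1 v.1 from rfl,
        myUMap_sub hN]
      rw [List.length_cons, pow_succ, ← div_div]
      gcongr
    · rw [show (Lmap x0 y0 len N w u).2 = uMap y0 len N w.2 u.2 from rfl,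
        show (Lmap x0 y0 len N w v).2 = uMap y0 len N w.2 v.2 from rfl,
        myUMap_sub hN]
      rw [List.length_cons, pow_succ, ← div_div]
      gcongr

lemma myCell_eudist {x0 y0 len : ℝ} (hlen : 0 ≤ len) {N : ℕ} (hN : 0 < N)
    (p : List (Fin N × Fin N)) {s t : ℝ × ℝ}
    (hs : s ∈ cell x0 y0 len N p) (ht : t ∈ cell x0 y0 len N p) :
    eudist s t ≤ Real.sqrt 2 * len / N ^ p.length := by
  obtain ⟨h1, h2⟩ := myCell_dist hlen hN p hs ht
  have hc : (0:ℝ) ≤ len / N ^ p.length := by positivity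
  have hb : (s.1 - t.1) ^ 2 + (s.2 - t.2) ^ 2 ≤ 2 * (len / N ^ p.length) ^ 2 := by
    have e1 := sq_le_sq' (by linarith [abs_nonneg (s.1-t.1), neg_abs_le (s.1-t.1)]) (le_abs_self (s.1-t.1))
    nlinarith [sq_abs (s.1-t.1), sq_abs (s.2-t.2), pow_le_pow_left₀ (abs_nonneg (s.1-t.1)) h1 2,
      pow_le_pow_left₀ (abs_nonneg (s.2-t.2)) h2 2]
  calc eudist s t ≤ Real.sqrt (2 * (len / N ^ p.length) ^ 2) := Real.sqrt_le_sqrt hb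
    _ = Real.sqrt 2 * (len / N ^ p.length) := by
        rw [Real.sqrt_mul (by norm_num), Real.sqrt_sq hc]
    _ = Real.sqrt 2 * len / N ^ p.length := by ring

lemma myCell_cons {x0 y0 len : ℝ} {N : ℕ} (w : Fin N × Fin N) (ws : List (Fin N × Fin N)) :
    cell x0 y0 len N (w :: ws) = Lmap x0 y0 len N w '' cell x0 y0 len N ws := rfl

lemma myOscil_bddAbove {φ : ℝ × ℝ → ℝ} {E : Set (ℝ × ℝ)} {C : ℝ}
    (h : ∀ a ∈ E, |φ a| ≤ C) :
    BddAbove ((fun p : (ℝ × ℝ) × (ℝ × ℝ) => φ p.1 - φ p.2) '' (E ×ˢ E)) := by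
  refine ⟨2 * C, ?_⟩
  rintro y ⟨⟨a, b⟩, ⟨ha, hb⟩, rfl⟩
  obtain ⟨h1, h2⟩ := abs_le.mp (h a ha)
  obtain ⟨h3, h4⟩ := abs_le.mp (h b hb)
  simp only
  linarith

lemma myLe_oscil {φ : ℝ × ℝ → ℝ} {E : Set (ℝ × ℝ)}
    (hb : BddAbove ((fun p : (ℝ × ℝ) × (ℝ × ℝ) => φ p.1 - φ p.2) '' (E ×ˢ E)))
    {a b : ℝ × ℝ} (ha : a ∈ E) (hbm : b ∈ E) : φ a - φ b ≤ oscil φ E :=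
  le_csSup hb ⟨(a, b), ⟨ha, hbm⟩, rfl⟩

lemma myAbs_le_oscil {φ : ℝ × ℝ → ℝ} {E : Set (ℝ × ℝ)}
    (hb : BddAbove ((fun p : (ℝ × ℝ) × (ℝ × ℝ) => φ p.1 - φ p.2) '' (E ×ˢ E)))
    {a b : ℝ × ℝ} (ha : a ∈ E) (hbm : b ∈ E) : |φ a - φ b| ≤ oscil φ E :=
  abs_sub_le_iff.mpr ⟨myLe_oscil hb ha hbm, myLe_oscil hb hbm ha⟩

lemma myOscil_nonneg {φ : ℝ × ℝ → ℝ} {E : Set (ℝ × ℝ)} (hE : E.Nonempty)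
    (hb : BddAbove ((fun p : (ℝ × ℝ) × (ℝ × ℝ) => φ p.1 - φ p.2) '' (E ×ˢ E))) :
    0 ≤ oscil φ E := by
  obtain ⟨a, ha⟩ := hE
  simpa using myLe_oscil hb ha ha

lemma myOscil_le {φ : ℝ × ℝ → ℝ} {E : Set (ℝ × ℝ)} {C : ℝ} (hE : E.Nonempty)
    (h : ∀ a ∈ E, ∀ b ∈ E, φ a - φ b ≤ C) : oscil φ E ≤ C := by
  apply csSup_le ((hE.prod hE).image _)
  rintro y ⟨⟨a, b⟩, ⟨ha, hb⟩, rfl⟩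
  exact h a ha b hb

lemma myKey (x0 y0 len : ℝ) (hlen : 0 < len) (N : ℕ) (hN : 2 ≤ N)
    (f S q : ℝ × ℝ → ℝ) (lamS lamq Mf : ℝ) (hlamS : 0 < lamS) (hlamq : 0 < lamq)
    (hMf : ∀ t ∈ sqD x0 y0 len, |f t| ≤ Mf)
    (hSlip : ∀ t₁ ∈ sqD x0 y0 len, ∀ t₂ ∈ sqD x0 y0 len, |S t₁ - S t₂| ≤ lamS * eudist t₁ t₂)
    (hS1 : ∀ t ∈ sqD x0 y0 len, |S t| < 1)
    (hqlip : ∀ t₁ ∈ sqD x0 y0 len, ∀ t₂ ∈ sqD x0 y0 len, |q t₁ - q t₂| ≤ lamq * eudist t₁ t₂)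
    (hself : ∀ w : Fin N × Fin N, ∀ t ∈ cell x0 y0 len N [w],
      f t = S t * f (LInv x0 y0 len N w t) + q t)
    (w0 : Fin N × Fin N) (r : List (Fin N × Fin N)) (F : Set (ℝ × ℝ))
    (hEF : cell x0 y0 len N (w0 :: r) ⊆ F) (hF : F ⊆ sqD x0 y0 len) :
    infAbs S F * oscil f (cell x0 y0 len N r)
        - (lamS * Mf + lamq) * (Real.sqrt 2 * len / N ^ (r.length + 1))
      ≤ oscil f (cell x0 y0 len N (w0 :: r)) ∧
    oscil f (cell x0 y0 len N (w0 :: r)) ≤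
      supAbs S F * oscil f (cell x0 y0 len N r)
        + (lamS * Mf + lamq) * (Real.sqrt 2 * len / N ^ (r.length + 1)) := by
  have hN0 : 0 < N := by omega
  have hlen0 : 0 ≤ len := hlen.le
  set E := cell x0 y0 len N (w0 :: r) with hEdef
  set E' := cell x0 y0 len N r with hE'def
  have hE'sub : E' ⊆ sqD x0 y0 len := myCell_subset_sqD hlen0 hN0 r
  have hEsub : E ⊆ sqD x0 y0 len := myCell_subset_sqD hlen0 hN0 _
  have hE'ne : E'.Nonempty := myCell_nonempty hlen0 r
  have hEne : E.Nonempty := myCell_nonempty hlen0 _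
  have hFne : F.Nonempty := hEne.mono hEF
  have hMf0 : 0 ≤ Mf := le_trans (abs_nonneg _) (hMf _ (hE'sub hE'ne.some_mem))
  have hbdd' : BddAbove ((fun p : (ℝ × ℝ) × (ℝ × ℝ) => f p.1 - f p.2) '' (E' ×ˢ E')) :=
    myOscil_bddAbove (fun a ha => hMf a (hE'sub ha))
  have hbddE : BddAbove ((fun p : (ℝ × ℝ) × (ℝ × ℝ) => f p.1 - f p.2) '' (E ×ˢ E)) :=
    myOscil_bddAbove (fun a ha => hMf a (hEsub ha))
  have hSbddA : BddAbove ((fun t => |S t|) '' F) :=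
    ⟨1, by rintro y ⟨t, ht, rfl⟩; exact (hS1 t (hF ht)).le⟩
  have hSbddB : BddBelow ((fun t => |S t|) '' F) :=
    ⟨0, by rintro y ⟨t, ht, rfl⟩; exact abs_nonneg _⟩
  have hA : ∀ t ∈ E, |S t| ≤ supAbs S F := fun t ht => le_csSup hSbddA ⟨t, hEF ht, rfl⟩
  have hA0 : 0 ≤ supAbs S F := le_trans (abs_nonneg _) (hA _ hEne.some_mem)
  have ha_le : ∀ t ∈ E, infAbs S F ≤ |S t| := fun t ht => csInf_le hSbddB ⟨t, hEF ht, rfl⟩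
  have ha0 : 0 ≤ infAbs S F :=
    le_csInf (hFne.image _) (by rintro y ⟨t, ht, rfl⟩; exact abs_nonneg _)
  have ha1 : infAbs S F ≤ 1 :=
    le_of_lt (lt_of_le_of_lt (ha_le _ hEne.some_mem) (hS1 _ (hEsub hEne.some_mem)))
  set d := Real.sqrt 2 * len / N ^ (r.length + 1) with hd
  have hd0 : 0 ≤ d := by positivity
  have herr0 : 0 ≤ (lamS * Mf + lamq) * d := by
    apply mul_nonneg _ hd0; nlinarith
  have hdiam : ∀ t₁ ∈ E, ∀ t₂ ∈ E, eudist t₁ t₂ ≤ d := by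
    intro t₁ h1 t₂ h2
    have := myCell_eudist hlen0 hN0 (w0 :: r) h1 h2
    simpa using this
  have hfeq : ∀ u ∈ E', f (Lmap x0 y0 len N w0 u)
      = S (Lmap x0 y0 len N w0 u) * f u + q (Lmap x0 y0 len N w0 u) := by
    intro u hu
    have hmem : Lmap x0 y0 len N w0 u ∈ cell x0 y0 len N [w0] := by
      rw [myCell_cons]
      exact Set.mem_image_of_mem _ (hE'sub hu)
    have := hself w0 _ hmem
    rwa [myLInv_Lmap hN0] at this
  have hmemE : ∀ u ∈ E', Lmap x0 y0 len N w0 u ∈ E := by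
    intro u hu; rw [hEdef, myCell_cons]; exact Set.mem_image_of_mem _ hu
  have hEst : ∀ u₁ ∈ E', ∀ u₂ ∈ E',
      |f (Lmap x0 y0 len N w0 u₁) - f (Lmap x0 y0 len N w0 u₂)
        - S (Lmap x0 y0 len N w0 u₁) * (f u₁ - f u₂)| ≤ (lamS * Mf + lamq) * d := by
    intro u₁ h1 u₂ h2
    have ht1 : Lmap x0 y0 len N w0 u₁ ∈ E := hmemE u₁ h1
    have ht2 : Lmap x0 y0 len N w0 u₂ ∈ E := hmemE u₂ h2
    set t₁ := Lmap x0 y0 len N w0 u₁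
    set t₂ := Lmap x0 y0 len N w0 u₂
    have key : f t₁ - f t₂ - S t₁ * (f u₁ - f u₂)
        = (S t₁ - S t₂) * f u₂ + (q t₁ - q t₂) := by
      rw [hfeq u₁ h1, hfeq u₂ h2]; ring
    rw [key]
    have e1 : |(S t₁ - S t₂) * f u₂| ≤ lamS * d * Mf := by
      rw [abs_mul]
      apply mul_le_mul _ (hMf _ (hE'sub h2)) (abs_nonneg _) (by positivity)
      calc |S t₁ - S t₂| ≤ lamS * eudist t₁ t₂ := hSlip _ (hEsub ht1) _ (hEsub ht2)
        _ ≤ lamS * d := by gcongr; exact hdiam _ ht1 _ ht2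
    have e2 : |q t₁ - q t₂| ≤ lamq * d := by
      calc |q t₁ - q t₂| ≤ lamq * eudist t₁ t₂ := hqlip _ (hEsub ht1) _ (hEsub ht2)
        _ ≤ lamq * d := by gcongr; exact hdiam _ ht1 _ ht2
    calc |(S t₁ - S t₂) * f u₂ + (q t₁ - q t₂)|
        ≤ |(S t₁ - S t₂) * f u₂| + |q t₁ - q t₂| := abs_add_le _ _
      _ ≤ lamS * d * Mf + lamq * d := add_le_add e1 e2
      _ = (lamS * Mf + lamq) * d := by ring
  have hosc'0 : 0 ≤ oscil f E' := myOscil_nonneg hE'ne hbdd'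
  have hoscE0 : 0 ≤ oscil f E := myOscil_nonneg hEne hbddE
  constructor
  · -- lower bound
    refine le_of_forall_pos_le_add fun ε hε => ?_
    rcases le_or_gt (oscil f E') ε with hcase | hcase
    · have h1 : infAbs S F * oscil f E' ≤ 1 * oscil f E' :=
        mul_le_mul_of_nonneg_right ha1 hosc'0
      linarith
    · obtain ⟨y, ⟨⟨u₁, u₂⟩, ⟨h1, h2⟩, rfl⟩, hy⟩ :=
        exists_lt_of_lt_csSup ((hE'ne.prod hE'ne).image _)
          (show oscil f E' - ε < oscil f E' by linarith)
      simp only at hy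
      have ht1 : Lmap x0 y0 len N w0 u₁ ∈ E := hmemE u₁ h1
      have ht2 : Lmap x0 y0 len N w0 u₂ ∈ E := hmemE u₂ h2
      set t₁ := Lmap x0 y0 len N w0 u₁
      set t₂ := Lmap x0 y0 len N w0 u₂
      have hest := hEst u₁ h1 u₂ h2
      have habsE : |f t₁ - f t₂| ≤ oscil f E := myAbs_le_oscil hbddE ht1 ht2
      have hΔpos : 0 ≤ f u₁ - f u₂ := by linarith
      have h7 : infAbs S F * (f u₁ - f u₂) ≤ |S t₁| * (f u₁ - f u₂) :=
        mul_le_mul_of_nonneg_right (ha_le _ ht1) hΔpos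
      have h8 : |S t₁| * (f u₁ - f u₂) = |S t₁ * (f u₁ - f u₂)| := by
        rw [abs_mul, abs_of_nonneg hΔpos]
      have h9 : |S t₁ * (f u₁ - f u₂)|
          ≤ |f t₁ - f t₂| + |f t₁ - f t₂ - S t₁ * (f u₁ - f u₂)| := by
        have := abs_sub_abs_le_abs_sub (S t₁ * (f u₁ - f u₂)) (f t₁ - f t₂)
        have h' : |S t₁ * (f u₁ - f u₂) - (f t₁ - f t₂)|
            = |f t₁ - f t₂ - S t₁ * (f u₁ - f u₂)| := abs_sub_comm _ _
        linarith
      have h10 : infAbs S F * (oscil f E' - ε) ≤ infAbs S F * (f u₁ - f u₂) :=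
        mul_le_mul_of_nonneg_left (by linarith) ha0
      have h11 : infAbs S F * ε ≤ 1 * ε := mul_le_mul_of_nonneg_right ha1 hε.le
      nlinarith
  · -- upper bound
    apply myOscil_le hEne
    rintro t₁ ⟨u₁, h1, rfl⟩ t₂ ⟨u₂, h2, rfl⟩
    have hest := hEst u₁ h1 u₂ h2
    have h5 : |f u₁ - f u₂| ≤ oscil f E' := myAbs_le_oscil hbdd' h1 h2
    have h6 : |S (Lmap x0 y0 len N w0 u₁) * (f u₁ - f u₂)| ≤ supAbs S F * oscil f E' := by
      rw [abs_mul]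
      exact mul_le_mul (hA _ (hmemE u₁ h1)) h5 (abs_nonneg _) hA0
    have l1 := le_abs_self (f (Lmap x0 y0 len N w0 u₁) - f (Lmap x0 y0 len N w0 u₂)
      - S (Lmap x0 y0 len N w0 u₁) * (f u₁ - f u₂))
    have l2 := le_abs_self (S (Lmap x0 y0 len N w0 u₁) * (f u₁ - f u₂))
    linarith

lemma myOfFn_snoc {α : Type*} {m : ℕ} (g : Fin m → α) (w : α) :
    List.ofFn (Fin.snoc g w : Fin (m + 1) → α) = List.ofFn g ++ [w] := by
  rw [List.ofFn_succ']
  simp [List.concat_eq_append]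

lemma mySnoc_bij {α : Type*} {m : ℕ} :
    Function.Bijective (fun p : (Fin m → α) × α => (Fin.snoc p.1 p.2 : Fin (m + 1) → α)) := by
  constructor
  · rintro ⟨g1, w1⟩ ⟨g2, w2⟩ h
    have h1 : g1 = g2 := by
      funext t
      have := congrFun h t.castSucc
      simpa using this
    have h2 : w1 = w2 := by
      have := congrFun h (Fin.last m)
      simpa using this
    simp [h1, h2]
  · intro i
    exact ⟨(fun t => i t.castSucc, i (Fin.last m)), by
      funext t
      refine Fin.lastCases ?_ ?_ t <;> simp⟩

lemma myMulVec_gen {N m : ℕ} (c : List (Fin N × Fin N) → ℝ)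
    (M : Matrix (Fin (m + 1) → Fin N × Fin N) (Fin (m + 1) → Fin N × Fin N) ℝ)
    (hM : ∀ i j, M i j = if ∀ k : Fin m, i k.succ = j k.castSucc then
      c (List.ofFn i ++ [j (Fin.last m)]) else 0)
    (v : (Fin (m + 1) → Fin N × Fin N) → ℝ) (j : Fin (m + 1) → Fin N × Fin N) :
    M.mulVec v j = ∑ w : Fin N × Fin N,
      c (List.ofFn j ++ [w]) * v (Fin.snoc (fun t : Fin m => j t.succ) w) := by
  rw [Matrix.mulVec, dotProduct]
  rw [← Fintype.sum_bijective _ mySnoc_bij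
    (fun p : (Fin m → Fin N × Fin N) × (Fin N × Fin N) =>
      M j (Fin.snoc p.1 p.2) * v (Fin.snoc p.1 p.2)) _ (fun p => rfl)]
  rw [Fintype.sum_prod_type_right]
  refine Finset.sum_congr rfl fun w _ => ?_
  have : ∀ g : Fin m → Fin N × Fin N,
      M j (Fin.snoc g w) * v (Fin.snoc g w)
      = if g = (fun t => j t.succ) then
          c (List.ofFn j ++ [w]) * v (Fin.snoc (fun t : Fin m => j t.succ) w) else 0 := by
    intro g
    rw [hM]
    simp only [Fin.snoc_castSucc, Fin.snoc_last]
    by_cases h : g = fun t => j t.succ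
    · subst h
      simp
    · rw [if_neg, if_neg h, zero_mul]
      intro hc
      exact h (funext fun t => (hc t).symm)
  simp only [this]
  rw [Finset.sum_ite_eq' Finset.univ]
  simp

lemma myCons_bij {α : Type*} {m : ℕ} :
    Function.Bijective (fun p : α × (Fin m → α) => (Fin.cons p.1 p.2 : Fin (m + 1) → α)) := by
  constructor
  · rintro ⟨w1, g1⟩ ⟨w2, g2⟩ h
    have h1 : w1 = w2 := by simpa using congrFun h 0
    have h2 : g1 = g2 := by
      funext t
      simpa using congrFun h t.succ
    simp [h1, h2]
  · intro i
    exact ⟨(i 0, fun t => i t.succ), by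
      funext t
      refine Fin.cases ?_ ?_ t <;> simp⟩

/-- vertical scaling matrices pass oscillation vectors,
`M̲_n V(f,n,k-1) − N^k u_n ≤ V(f,n,k) ≤ M̄_n V(f,n,k-1) + N^k u_n` (here n = m+1). -/
theorem oscVector_matrix_inequality (x0 y0 len : ℝ) (hlen : 0 < len) (N : ℕ) (hN : 2 ≤ N)
    (f S q : ℝ × ℝ → ℝ) (lamS lamq : ℝ) (hlamS : 0 < lamS) (hlamq : 0 < lamq)
    (hf : ContinuousOn f (sqD x0 y0 len))
    (hSlip : ∀ t₁ ∈ sqD x0 y0 len, ∀ t₂ ∈ sqD x0 y0 len, |S t₁ - S t₂| ≤ lamS * eudist t₁ t₂)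
    (hS1 : ∀ t ∈ sqD x0 y0 len, |S t| < 1)
    (hqlip : ∀ t₁ ∈ sqD x0 y0 len, ∀ t₂ ∈ sqD x0 y0 len, |q t₁ - q t₂| ≤ lamq * eudist t₁ t₂)
    (hself : ∀ w : Fin N × Fin N, ∀ t ∈ cell x0 y0 len N [w],
      f t = S t * f (LInv x0 y0 len N w t) + q t) :
    ∀ (m k : ℕ), 0 < k → ∀ j : Fin (m + 1) → Fin N × Fin N,
      (lowMat x0 y0 len N S m).mulVec
          (fun i => oscSum x0 y0 len N f (List.ofFn i) (k - 1)) j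
        - (N : ℝ) ^ k * (Real.sqrt 2 * (2 * lamS * supAbs f (sqD x0 y0 len) + lamq) * len
            / (N : ℝ) ^ (m + 1))
        ≤ oscSum x0 y0 len N f (List.ofFn j) k ∧
      oscSum x0 y0 len N f (List.ofFn j) k ≤
        (upMat x0 y0 len N S m).mulVec
          (fun i => oscSum x0 y0 len N f (List.ofFn i) (k - 1)) j
        + (N : ℝ) ^ k * (Real.sqrt 2 * (2 * lamS * supAbs f (sqD x0 y0 len) + lamq) * len
            / (N : ℝ) ^ (m + 1)) := by
  intro m k hk j
  obtain ⟨k', rfl⟩ : ∃ k', k = k' + 1 := ⟨k - 1, (Nat.succ_pred_eq_of_pos hk).symm⟩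
  simp only [Nat.add_sub_cancel]
  set Mf := supAbs f (sqD x0 y0 len) with hMfdef
  have hsqne : (sqD x0 y0 len).Nonempty := mySqD_nonempty hlen.le
  have hcomp : IsCompact (sqD x0 y0 len) := isCompact_Icc.prod isCompact_Icc
  have hbdd : BddAbove ((fun t => |f t|) '' sqD x0 y0 len) := hcomp.bddAbove_image hf.abs
  have hMf : ∀ t ∈ sqD x0 y0 len, |f t| ≤ Mf := fun t ht => le_csSup hbdd ⟨t, ht, rfl⟩
  have hMf0 : 0 ≤ Mf := le_trans (abs_nonneg _) (hMf _ hsqne.some_mem)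
  have hN0 : 0 < N := by omega
  have hNR : (0:ℝ) < N := by exact_mod_cast hN0
  have hNne : (N:ℝ) ≠ 0 := ne_of_gt hNR
  set g : Fin m → Fin N × Fin N := fun t => j t.succ with hg
  set err : ℝ := (lamS * Mf + lamq) * (Real.sqrt 2 * len / (N:ℝ) ^ (m + k' + 2)) with herrdef
  have herr0 : 0 ≤ err := by
    apply mul_nonneg _ (by positivity)
    nlinarith
  -- per-term key estimates
  have hterm : ∀ (w : Fin N × Fin N) (v' : Fin k' → Fin N × Fin N),
      infAbs S (cell x0 y0 len N (List.ofFn j ++ [w]))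
          * oscil f (cell x0 y0 len N (List.ofFn (Fin.snoc g w) ++ List.ofFn v')) - err
        ≤ oscil f (cell x0 y0 len N (List.ofFn j ++ w :: List.ofFn v'))
      ∧ oscil f (cell x0 y0 len N (List.ofFn j ++ w :: List.ofFn v'))
        ≤ supAbs S (cell x0 y0 len N (List.ofFn j ++ [w]))
          * oscil f (cell x0 y0 len N (List.ofFn (Fin.snoc g w) ++ List.ofFn v')) + err := by
    intro w v'
    have hr : List.ofFn (Fin.snoc g w) ++ List.ofFn v' = List.ofFn g ++ (w :: List.ofFn v') := by
      rw [myOfFn_snoc]; simp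
    have hj0 : List.ofFn j ++ w :: List.ofFn v'
        = j 0 :: (List.ofFn g ++ (w :: List.ofFn v')) := by
      rw [List.ofFn_succ]; simp [hg]
    have h2 : j 0 :: (List.ofFn g ++ (w :: List.ofFn v'))
        = (List.ofFn j ++ [w]) ++ List.ofFn v' := by
      rw [List.ofFn_succ]; simp [hg]
    have hsub : cell x0 y0 len N (j 0 :: (List.ofFn g ++ (w :: List.ofFn v')))
        ⊆ cell x0 y0 len N (List.ofFn j ++ [w]) := by
      rw [h2]; exact myCell_append_subset hlen.le hN0 _ _
    have hkey := myKey x0 y0 len hlen N hN f S q lamS lamq Mf hlamS hlamq hMf hSlip hS1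
      hqlip hself (j 0) (List.ofFn g ++ (w :: List.ofFn v'))
      (cell x0 y0 len N (List.ofFn j ++ [w])) hsub (myCell_subset_sqD hlen.le hN0 _)
    have hlen' : (List.ofFn g ++ (w :: List.ofFn v')).length + 1 = m + k' + 2 := by
      simp; omega
    rw [hlen'] at hkey
    rw [hr, hj0]
    exact hkey
  -- sum expansion
  have hsum : oscSum x0 y0 len N f (List.ofFn j) (k' + 1)
      = ∑ w : Fin N × Fin N, ∑ v' : Fin k' → Fin N × Fin N,
          oscil f (cell x0 y0 len N (List.ofFn j ++ w :: List.ofFn v')) := by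
    rw [show oscSum x0 y0 len N f (List.ofFn j) (k' + 1)
        = ∑ v : Fin (k' + 1) → Fin N × Fin N,
            oscil f (cell x0 y0 len N (List.ofFn j ++ List.ofFn v)) from rfl]
    rw [← Fintype.sum_bijective _ myCons_bij
      (fun p : (Fin N × Fin N) × (Fin k' → Fin N × Fin N) =>
        oscil f (cell x0 y0 len N (List.ofFn j ++ p.1 :: List.ofFn p.2))) _
      (fun p => by simp [List.ofFn_succ])]
    rw [Fintype.sum_prod_type]
  have hconst1 : ∀ x : ℝ, (∑ _v' : Fin k' → Fin N × Fin N, x) = ((N:ℝ) * N) ^ k' * x := by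
    intro x
    rw [Finset.sum_const, nsmul_eq_mul, Finset.card_univ, Fintype.card_fun]
    simp only [Fintype.card_prod, Fintype.card_fin]
    push_cast
    ring
  have hconst2 : ∀ x : ℝ, (∑ _w : Fin N × Fin N, x) = ((N:ℝ) * N) * x := by
    intro x
    rw [Finset.sum_const, nsmul_eq_mul, Finset.card_univ, Fintype.card_prod]
    simp only [Fintype.card_fin]
    push_cast
    ring
  have hfinal : ((N:ℝ) * N) * (((N:ℝ) * N) ^ k' * err)
      ≤ (N:ℝ) ^ (k' + 1) * (Real.sqrt 2 * (2 * lamS * Mf + lamq) * len / (N:ℝ) ^ (m + 1)) := by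
    have h1 : ((N:ℝ) * N) * (((N:ℝ) * N) ^ k' * err)
        = (N:ℝ) ^ (k' + 1) * (Real.sqrt 2 * (lamS * Mf + lamq) * len / (N:ℝ) ^ (m + 1)) := by
      rw [herrdef]
      field_simp
      ring
    rw [h1]
    gcongr <;> linarith
  have hVlow := myMulVec_gen (fun l => infAbs S (cell x0 y0 len N l))
    (lowMat x0 y0 len N S m) (fun i j => rfl)
    (fun i => oscSum x0 y0 len N f (List.ofFn i) k') j
  have hVup := myMulVec_gen (fun l => supAbs S (cell x0 y0 len N l))
    (upMat x0 y0 len N S m) (fun i j => rfl)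
    (fun i => oscSum x0 y0 len N f (List.ofFn i) k') j
  have hoscSnoc : ∀ w : Fin N × Fin N,
      oscSum x0 y0 len N f (List.ofFn (Fin.snoc g w)) k'
      = ∑ v' : Fin k' → Fin N × Fin N,
          oscil f (cell x0 y0 len N (List.ofFn (Fin.snoc g w) ++ List.ofFn v')) := fun _ => rfl
  constructor
  · -- lower bound
    rw [hVlow, hsum]
    have step : ∀ w : Fin N × Fin N,
        infAbs S (cell x0 y0 len N (List.ofFn j ++ [w]))
            * oscSum x0 y0 len N f (List.ofFn (Fin.snoc g w)) k'
          - ((N:ℝ) * N) ^ k' * err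
        ≤ ∑ v' : Fin k' → Fin N × Fin N,
            oscil f (cell x0 y0 len N (List.ofFn j ++ w :: List.ofFn v')) := by
      intro w
      have e1 : infAbs S (cell x0 y0 len N (List.ofFn j ++ [w]))
            * oscSum x0 y0 len N f (List.ofFn (Fin.snoc g w)) k'
          - ((N:ℝ) * N) ^ k' * err
          = ∑ v' : Fin k' → Fin N × Fin N,
              (infAbs S (cell x0 y0 len N (List.ofFn j ++ [w]))
                * oscil f (cell x0 y0 len N (List.ofFn (Fin.snoc g w) ++ List.ofFn v')) - err) := by
        rw [Finset.sum_sub_distrib, ← Finset.mul_sum, hconst1, hoscSnoc]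
      rw [e1]
      exact Finset.sum_le_sum fun v' _ => (hterm w v').1
    have h3 := Finset.sum_le_sum (fun w (_ : w ∈ Finset.univ) => step w)
    rw [Finset.sum_sub_distrib, hconst2] at h3
    linarith
  · -- upper bound
    rw [hVup, hsum]
    have step : ∀ w : Fin N × Fin N,
        (∑ v' : Fin k' → Fin N × Fin N,
            oscil f (cell x0 y0 len N (List.ofFn j ++ w :: List.ofFn v')))
        ≤ supAbs S (cell x0 y0 len N (List.ofFn j ++ [w]))
            * oscSum x0 y0 len N f (List.ofFn (Fin.snoc g w)) k'
          + ((N:ℝ) * N) ^ k' * err := by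
      intro w
      have e1 : supAbs S (cell x0 y0 len N (List.ofFn j ++ [w]))
            * oscSum x0 y0 len N f (List.ofFn (Fin.snoc g w)) k'
          + ((N:ℝ) * N) ^ k' * err
          = ∑ v' : Fin k' → Fin N × Fin N,
              (supAbs S (cell x0 y0 len N (List.ofFn j ++ [w]))
                * oscil f (cell x0 y0 len N (List.ofFn (Fin.snoc g w) ++ List.ofFn v')) + err) := by
        rw [Finset.sum_add_distrib, ← Finset.mul_sum, hconst1, hoscSnoc]
      rw [e1]
      exact Finset.sum_le_sum fun v' _ => (hterm w v').2
    have h3 := Finset.sum_le_sum (fun w (_ : w ∈ Finset.univ) => step w)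
    rw [Finset.sum_add_distrib, hconst2] at h3
    linarith
end

section
/- For every n ∈ ℤ⁺ the spectral radii of the vertical scaling matrices satisfy ρ(M̲_n) ≤ ρ(M̲_{n+1}) ≤ ρ(M̄_{n+1}) ≤ ρ(M̄_n). Consequently the limits ρ* = lim_{n→∞} ρ(M̄_n) and ρ_* = lim_{n→∞} ρ(M̲_n) exist and ρ_* ≤ ρ*. -/
open scoped BigOperators

noncomputable def specRad {α : Type*} [Fintype α] [DecidableEq α] (A : Matrix α α ℝ) : ENNReal :=
  spectralRadius ℂ (A.map (fun x : ℝ => (x : ℂ)))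

/-! ### Auxiliary geometric lemmas -/

lemma uMap_mem (x0 len : ℝ) (hlen : 0 < len) (N : ℕ) (hN : 1 ≤ N) (i : Fin N)
    {x : ℝ} (hx : x ∈ Set.Icc x0 (x0 + len)) :
    uMap x0 len N i x ∈ Set.Icc x0 (x0 + len) := by
  obtain ⟨hx1, hx2⟩ := hx
  have hN0 : (0:ℝ) < N := by exact_mod_cast Nat.pos_of_ne_zero (by omega)
  have hi1 : ((i : ℕ) : ℝ) + 1 ≤ N := by exact_mod_cast i.isLt
  have hi0 : (0:ℝ) ≤ (i : ℕ) := by positivity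
  have h1 : (0:ℝ) ≤ (x - x0) / N := by
    apply div_nonneg <;> linarith
  have h2 : (x - x0) / N ≤ len / N := by
    gcongr; linarith
  have hL : 0 < len / N := by positivity
  have h3 : ((i:ℕ):ℝ) * (len / N) + len / N ≤ len := by
    have h4 : (((i:ℕ):ℝ) + 1) * (len / N) ≤ (N:ℝ) * (len / N) := by nlinarith
    have h5 : (N:ℝ) * (len / N) = len := by field_simp
    nlinarith
  unfold uMap
  split_ifs
  · constructor <;> [nlinarith [mul_nonneg hi0 hL.le]; nlinarith]
  · constructor <;> [nlinarith; nlinarith]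

section Geom

variable {x0 y0 len : ℝ} {N : ℕ}

lemma Lmap_mem (hlen : 0 < len) (hN : 1 ≤ N) (w : Fin N × Fin N)
    {t : ℝ × ℝ} (ht : t ∈ sqD x0 y0 len) : Lmap x0 y0 len N w t ∈ sqD x0 y0 len := by
  obtain ⟨h1, h2⟩ := ht
  exact ⟨uMap_mem x0 len hlen N hN w.1 h1, uMap_mem y0 len hlen N hN w.2 h2⟩

lemma cell_subset_sqD (hlen : 0 < len) (hN : 1 ≤ N) :
    ∀ w : List (Fin N × Fin N), cell x0 y0 len N w ⊆ sqD x0 y0 len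
  | [] => le_refl _
  | a :: ws => by
      intro t ht
      obtain ⟨s, hs, rfl⟩ := ht
      exact Lmap_mem hlen hN a (cell_subset_sqD hlen hN ws hs)

lemma sqD_nonempty (hlen : 0 < len) : (sqD x0 y0 len).Nonempty :=
  ⟨(x0, y0), ⟨⟨le_refl _, by linarith⟩, ⟨le_refl _, by linarith⟩⟩⟩

lemma cell_nonempty (hlen : 0 < len) :
    ∀ w : List (Fin N × Fin N), (cell x0 y0 len N w).Nonempty
  | [] => sqD_nonempty hlen
  | _ :: ws => (cell_nonempty hlen ws).image _

lemma cell_append_singleton (hlen : 0 < len) (hN : 1 ≤ N) :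
    ∀ (w : List (Fin N × Fin N)) (a : Fin N × Fin N),
      cell x0 y0 len N (w ++ [a]) ⊆ cell x0 y0 len N w
  | [], a => by
      intro t ht
      obtain ⟨s, hs, rfl⟩ := ht
      exact Lmap_mem hlen hN a hs
  | b :: ws, a => Set.image_mono (cell_append_singleton hlen hN ws a)

end Geom

/-! ### sup/inf lemmas -/

section SupInf

variable {x0 y0 len : ℝ} {S : ℝ × ℝ → ℝ}

lemma bddAbove_absS (hS1 : ∀ t ∈ sqD x0 y0 len, |S t| < 1) {E : Set (ℝ × ℝ)}
    (hE : E ⊆ sqD x0 y0 len) : BddAbove ((fun t => |S t|) '' E) :=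
  ⟨1, fun y ⟨t, ht, hyt⟩ => hyt ▸ (hS1 t (hE ht)).le⟩

lemma bddBelow_absS {E : Set (ℝ × ℝ)} : BddBelow ((fun t => |S t|) '' E) :=
  ⟨0, fun y ⟨t, _, hyt⟩ => hyt ▸ abs_nonneg _⟩

lemma infAbs_nonneg {E : Set (ℝ × ℝ)} (hE : E.Nonempty) : 0 ≤ infAbs S E :=
  le_csInf (hE.image _) (fun y ⟨t, _, hyt⟩ => hyt ▸ abs_nonneg _)

lemma infAbs_le_supAbs (hS1 : ∀ t ∈ sqD x0 y0 len, |S t| < 1) {E : Set (ℝ × ℝ)}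
    (hE : E.Nonempty) (hED : E ⊆ sqD x0 y0 len) : infAbs S E ≤ supAbs S E := by
  obtain ⟨t, ht⟩ := hE
  exact le_trans (csInf_le bddBelow_absS ⟨t, ht, rfl⟩)
    (le_csSup (bddAbove_absS hS1 hED) ⟨t, ht, rfl⟩)

lemma supAbs_nonneg (hS1 : ∀ t ∈ sqD x0 y0 len, |S t| < 1) {E : Set (ℝ × ℝ)}
    (hE : E.Nonempty) (hED : E ⊆ sqD x0 y0 len) : 0 ≤ supAbs S E :=
  le_trans (infAbs_nonneg hE) (infAbs_le_supAbs hS1 hE hED)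

lemma supAbs_mono (hS1 : ∀ t ∈ sqD x0 y0 len, |S t| < 1) {E F : Set (ℝ × ℝ)}
    (hE : E.Nonempty) (hEF : E ⊆ F) (hFD : F ⊆ sqD x0 y0 len) :
    supAbs S E ≤ supAbs S F :=
  csSup_le_csSup (bddAbove_absS hS1 hFD) (hE.image _) (Set.image_mono hEF)

lemma infAbs_anti {E F : Set (ℝ × ℝ)} (hE : E.Nonempty) (hEF : E ⊆ F) :
    infAbs S F ≤ infAbs S E :=
  csInf_le_csInf bddBelow_absS (hE.image _) (Set.image_mono hEF)

end SupInf

/-! ### Abstract matrix machinery -/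

section MatrixMachinery

variable {G : Type*} [Fintype G] [DecidableEq G]

open Classical in
noncomputable def PM (m : ℕ) (B : Matrix (Fin (m + 1) → G) (Fin (m + 1) → G) ℝ) :
    Matrix (Fin (m + 2) → G) (Fin (m + 1) → G) ℝ :=
  fun i q => if Fin.tail i = q then B (Fin.init i) q else 0

open Classical in
noncomputable def EM (G : Type*) [Fintype G] [DecidableEq G] (m : ℕ) :
    Matrix (Fin (m + 1) → G) (Fin (m + 2) → G) ℝ :=
  fun q j => if Fin.init j = q then 1 else 0

noncomputable def eSum {α β : Type*} [Fintype α] [Fintype β] (M : Matrix α β ℝ) : ℝ :=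
  ∑ i, ∑ j, M i j

lemma dl_snoc {m : ℕ} (q : Fin (m + 1) → G) (a : G) :
    Fin.init (Fin.snoc q a : Fin (m + 2) → G) = q := by
  funext k; simp [Fin.init, Fin.snoc_castSucc]

lemma df_snoc {m : ℕ} (q r : Fin (m + 1) → G)
    (hqr : ∀ k : Fin m, q k.succ = r k.castSucc) :
    Fin.tail (Fin.snoc q (r (Fin.last m)) : Fin (m + 2) → G) = r := by
  funext k
  unfold Fin.tail
  refine Fin.lastCases ?_ (fun k' => ?_) k
  · rw [Fin.succ_last, Fin.snoc_last]
  · rw [Fin.succ_castSucc, Fin.snoc_castSucc]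
    exact hqr k'

lemma EM_mul_PM (m : ℕ) (B : Matrix (Fin (m + 1) → G) (Fin (m + 1) → G) ℝ)
    (hB0 : ∀ q r, ¬ (∀ k : Fin m, q k.succ = r k.castSucc) → B q r = 0) :
    EM G m * PM m B = B := by
  classical
  funext q r
  rw [Matrix.mul_apply]
  unfold EM PM
  by_cases hqr : ∀ k : Fin m, q k.succ = r k.castSucc
  · rw [Finset.sum_eq_single (Fin.snoc q (r (Fin.last m)))]
    · rw [if_pos (dl_snoc q _), if_pos (df_snoc q r hqr), dl_snoc, one_mul]
    · intro j _ hj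
      rcases eq_or_ne (Fin.init j) q with h1 | h1
      · rcases eq_or_ne (Fin.tail j) r with h2 | h2
        · exfalso; apply hj
          funext k
          refine Fin.lastCases ?_ (fun k' => ?_) k
          · rw [Fin.snoc_last, ← h2]; rfl
          · rw [Fin.snoc_castSucc, ← h1]; rfl
        · rw [if_neg h2, mul_zero]
      · rw [if_neg h1, zero_mul]
    · simp
  · rw [hB0 q r hqr]
    apply Finset.sum_eq_zero
    intro j _
    rcases eq_or_ne (Fin.init j) q with h1 | h1
    · rcases eq_or_ne (Fin.tail j) r with h2 | h2
      · exfalso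
        apply hqr
        intro k
        rw [← h1, ← h2]
        show j k.succ.castSucc = j k.castSucc.succ
        rw [Fin.succ_castSucc]
      · rw [if_neg h2, mul_zero]
    · rw [if_neg h1, zero_mul]

lemma PM_mul_EM_apply (m : ℕ) (B : Matrix (Fin (m + 1) → G) (Fin (m + 1) → G) ℝ)
    (i j : Fin (m + 2) → G) :
    (PM m B * EM (G := G) m) i j =
      if Fin.tail i = Fin.init j then B (Fin.init i) (Fin.tail i) else 0 := by
  classical
  rw [Matrix.mul_apply]
  unfold PM EM
  rw [Finset.sum_eq_single (Fin.tail i)]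
  · rcases eq_or_ne (Fin.tail i) (Fin.init j) with h | h
    · rw [if_pos rfl, if_pos h.symm, if_pos h, mul_one]
    · rw [if_pos rfl, if_neg (fun hh => h hh.symm), if_neg h, mul_zero]
  · intro q _ hq
    rw [if_neg (fun hh => hq hh.symm), zero_mul]
  · simp

lemma rowsum_EM (m : ℕ) (r : Fin (m + 1) → G) :
    ∑ j, EM G m r j = (Fintype.card G : ℝ) := by
  classical
  unfold EM
  rw [← Fintype.sum_equiv (Fin.snocEquiv (fun _ : Fin (m+2) => G))
      (fun p => if p.2 = r then (1:ℝ) else 0) _ ?_]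
  · rw [Fintype.sum_prod_type]
    have h1 : ∀ a : G, ∑ x : Fin (m+1) → G, (if x = r then (1:ℝ) else 0) = 1 := fun a => by
      rw [Finset.sum_ite_eq' Finset.univ r (fun _ => (1:ℝ))]; simp
    rw [Finset.sum_congr rfl (fun a _ => h1 a)]
    simp [Finset.card_univ]
  · intro p
    simp [Fin.snocEquiv, Fin.init_snoc]

lemma init_cons (m : ℕ) (a : G) (q : Fin (m + 1) → G) :
    Fin.init (Fin.cons a q : Fin (m + 2) → G) = Fin.cons a (Fin.init q) := by
  funext k
  refine Fin.cases ?_ (fun k' => ?_) k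
  · simp [Fin.init]
  · show (Fin.cons a q : Fin (m+2) → G) (Fin.castSucc k'.succ) = Fin.init q k'
    rw [← Fin.succ_castSucc, Fin.cons_succ]
    rfl

lemma colsum_PM (m : ℕ) (B : Matrix (Fin (m + 1) → G) (Fin (m + 1) → G) ℝ)
    (hB0 : ∀ q r, ¬ (∀ k : Fin m, q k.succ = r k.castSucc) → B q r = 0)
    (q : Fin (m + 1) → G) :
    ∑ i, PM m B i q = ∑ p, B p q := by
  classical
  have key : ∀ (a : G) (t : Fin m → G), t ≠ Fin.init q → B (Fin.cons a t) q = 0 := by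
    intro a t ht
    apply hB0
    intro hc
    apply ht
    funext k
    have := hc k
    rwa [Fin.cons_succ] at this
  have lhs : ∑ i, PM m B i q = ∑ a : G, B (Fin.cons a (Fin.init q)) q := by
    unfold PM
    rw [← Fintype.sum_equiv (Fin.consEquiv (fun _ : Fin (m+2) => G))
        (fun p : G × (Fin (m+1) → G) =>
          if p.2 = q then B (Fin.cons p.1 (Fin.init p.2)) q else 0) _ ?_]
    · rw [Fintype.sum_prod_type]
      refine Finset.sum_congr rfl (fun a _ => ?_)
      rw [Finset.sum_ite_eq' Finset.univ q (fun t => B (Fin.cons a (Fin.init t)) q)]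
      simp
    · rintro ⟨a, t⟩
      show _ = if Fin.tail (Fin.cons a t : Fin (m+2) → G) = q then
          B (Fin.init (Fin.cons a t : Fin (m+2) → G)) q else 0
      rw [Fin.tail_cons, init_cons]
  have rhs : ∑ p, B p q = ∑ a : G, B (Fin.cons a (Fin.init q)) q := by
    rw [← Fintype.sum_equiv (Fin.consEquiv (fun _ : Fin (m+1) => G))
        (fun p : G × (Fin m → G) => B (Fin.cons p.1 p.2) q) _ ?_]
    · rw [Fintype.sum_prod_type]
      refine Finset.sum_congr rfl (fun a _ => ?_)
      rw [Finset.sum_eq_single (Fin.init q)]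
      · intro t _ ht
        exact key a t ht
      · simp
    · rintro ⟨a, t⟩
      rfl
  rw [lhs, rhs]

lemma eSum_PME (m : ℕ) (B : Matrix (Fin (m + 1) → G) (Fin (m + 1) → G) ℝ)
    (hB0 : ∀ q r, ¬ (∀ k : Fin m, q k.succ = r k.castSucc) → B q r = 0)
    (M : Matrix (Fin (m + 1) → G) (Fin (m + 1) → G) ℝ) :
    eSum (PM m B * M * EM G m) = (Fintype.card G : ℝ) * eSum (B * M) := by
  unfold eSum
  have h1 : ∀ i, ∑ j, (PM m B * M * EM G m) i j
      = (∑ r, (PM m B * M) i r) * (Fintype.card G : ℝ) := by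
    intro i
    simp only [Matrix.mul_apply]
    rw [Finset.sum_comm]
    rw [Finset.sum_mul]
    refine Finset.sum_congr rfl (fun r _ => ?_)
    rw [← Finset.mul_sum, rowsum_EM]
  rw [Finset.sum_congr rfl (fun i _ => h1 i)]
  have h2 : ∀ r, ∑ i, (PM m B * M) i r = ∑ p, (B * M) p r := by
    intro r
    simp only [Matrix.mul_apply]
    rw [Finset.sum_comm]
    conv_rhs => rw [Finset.sum_comm]
    refine Finset.sum_congr rfl (fun q _ => ?_)
    rw [← Finset.sum_mul, ← Finset.sum_mul, colsum_PM m B hB0]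
  calc ∑ i, (∑ r, (PM m B * M) i r) * (Fintype.card G : ℝ)
      = (∑ r, ∑ i, (PM m B * M) i r) * (Fintype.card G : ℝ) := by
        rw [← Finset.sum_mul, Finset.sum_comm]
    _ = (∑ r, ∑ p, (B * M) p r) * (Fintype.card G : ℝ) := by
        rw [Finset.sum_congr rfl (fun r _ => h2 r)]
    _ = (Fintype.card G : ℝ) * ∑ p, ∑ r, (B * M) p r := by
        rw [Finset.sum_comm, mul_comm]

lemma PME_pow (m : ℕ) (B : Matrix (Fin (m + 1) → G) (Fin (m + 1) → G) ℝ)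
    (hB0 : ∀ q r, ¬ (∀ k : Fin m, q k.succ = r k.castSucc) → B q r = 0) (k : ℕ) :
    (PM m B * EM G m) ^ (k + 1) = PM m B * B ^ k * EM G m := by
  induction k with
  | zero => rw [pow_one, pow_zero, Matrix.mul_one]
  | succ k ih =>
      have e1 : PM m B * B ^ k * EM G m * (PM m B * EM G m)
          = PM m B * B ^ k * (EM G m * PM m B) * EM G m := by
        simp only [Matrix.mul_assoc]
      rw [pow_succ, ih, e1, EM_mul_PM m B hB0, pow_succ]
      simp only [Matrix.mul_assoc]

lemma pow_entry_le {α : Type*} [Fintype α] [DecidableEq α] {A B : Matrix α α ℝ}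
    (hA : ∀ i j, 0 ≤ A i j) (hAB : ∀ i j, A i j ≤ B i j) (k : ℕ) :
    (∀ i j, 0 ≤ (A ^ k) i j) ∧ (∀ i j, (A ^ k) i j ≤ (B ^ k) i j) := by
  induction k with
  | zero =>
      refine ⟨fun i j => ?_, fun i j => ?_⟩ <;>
        simp [pow_zero, Matrix.one_apply] <;> positivity
  | succ k ih =>
      obtain ⟨ih1, ih2⟩ := ih
      constructor
      · intro i j
        rw [pow_succ, Matrix.mul_apply]
        exact Finset.sum_nonneg fun q _ => mul_nonneg (ih1 i q) (hA q j)
      · intro i j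
        rw [pow_succ, pow_succ, Matrix.mul_apply, Matrix.mul_apply]
        refine Finset.sum_le_sum fun q _ => ?_
        exact mul_le_mul (ih2 i q) (hAB q j) (hA q j) (le_trans (ih1 i q) (ih2 i q))

lemma eSum_le_eSum {α : Type*} [Fintype α] {A B : Matrix α α ℝ}
    (h : ∀ i j, A i j ≤ B i j) : eSum A ≤ eSum B :=
  Finset.sum_le_sum fun i _ => Finset.sum_le_sum fun j _ => h i j

lemma eSum_nonneg {α : Type*} [Fintype α] {A : Matrix α α ℝ}
    (h : ∀ i j, 0 ≤ A i j) : 0 ≤ eSum A :=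
  Finset.sum_nonneg fun i _ => Finset.sum_nonneg fun j _ => h i j

end MatrixMachinery

/-! ### Spectral radius comparison via Gelfand's formula -/

attribute [local instance] Matrix.linftyOpNormedRing Matrix.linftyOpNormedAlgebra

noncomputable def sNN {α β : Type*} [Fintype α] [Fintype β] (M : Matrix α β ℝ) : NNReal :=
  ∑ i, ∑ j, ‖M i j‖₊

section NormFacts
variable {α : Type*} [Fintype α] [DecidableEq α]

lemma coe_sNN {M : Matrix α α ℝ} (hM : ∀ i j, 0 ≤ M i j) : (sNN M : ℝ) = eSum M := by
  unfold sNN eSum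
  push_cast
  refine Finset.sum_congr rfl fun i _ => Finset.sum_congr rfl fun j _ => ?_
  exact Real.norm_of_nonneg (hM i j)

lemma nnnorm_map_le (M : Matrix α α ℝ) : ‖M.map (fun x : ℝ => (x : ℂ))‖₊ ≤ sNN M := by
  rw [Matrix.linfty_opNNNorm_def]
  refine Finset.sup_le fun i _ => ?_
  have hrow : ∑ j, ‖(M.map (fun x : ℝ => (x : ℂ))) i j‖₊ = ∑ j, ‖M i j‖₊ := by
    refine Finset.sum_congr rfl fun j _ => ?_
    simp [Matrix.map_apply]
  rw [hrow]
  exact Finset.single_le_sum (f := fun i => ∑ j, ‖M i j‖₊) (fun _ _ => zero_le)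
    (Finset.mem_univ i)

lemma sNN_le_card_nnnorm (M : Matrix α α ℝ) :
    sNN M ≤ (Fintype.card α) • ‖M.map (fun x : ℝ => (x : ℂ))‖₊ := by
  rw [Matrix.linfty_opNNNorm_def]
  unfold sNN
  rw [← Finset.card_univ]
  refine Finset.sum_le_card_nsmul _ _ _ fun i _ => ?_
  have hrow : ∑ j, ‖M i j‖₊ = ∑ j, ‖(M.map (fun x : ℝ => (x : ℂ))) i j‖₊ := by
    refine Finset.sum_congr rfl fun j _ => ?_
    simp [Matrix.map_apply]
  rw [hrow]
  exact Finset.le_sup (f := fun i => ∑ j, ‖(M.map (fun x : ℝ => (x : ℂ))) i j‖₊)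
    (Finset.mem_univ i)

lemma map_pow_comm (M : Matrix α α ℝ) (k : ℕ) :
    (M.map (fun x : ℝ => (x : ℂ))) ^ k = (M ^ k).map (fun x : ℝ => (x : ℂ)) := by
  have : M.map (fun x : ℝ => (x : ℂ)) = Complex.ofRealHom.mapMatrix M := rfl
  rw [this, ← map_pow]
  rfl

end NormFacts

lemma tendsto_c_rpow (c : NNReal) (hc : 1 ≤ c) :
    Filter.Tendsto (fun k : ℕ => (c : ENNReal) ^ (1 / (k : ℝ))) Filter.atTop (nhds 1) := by
  have hc0 : (c : ℝ) ≠ 0 := by positivity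
  have hcnn0 : c ≠ 0 := fun h => hc0 (by simp [h])
  have hreal : Filter.Tendsto (fun k : ℕ => (c : ℝ) ^ (1 / (k : ℝ))) Filter.atTop (nhds 1) := by
    have := Filter.Tendsto.rpow (x := (c:ℝ)) (y := 0)
      tendsto_const_nhds tendsto_one_div_atTop_nhds_zero_nat (Or.inl hc0)
    simpa using this
  have hnn : Filter.Tendsto (fun k : ℕ => (c ^ (1 / (k : ℝ)) : NNReal)) Filter.atTop (nhds 1) := by
    rw [← NNReal.tendsto_coe]
    have he : ∀ k : ℕ, ((c ^ (1 / (k:ℝ)) : NNReal) : ℝ) = (c:ℝ) ^ (1 / (k:ℝ)) :=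
      fun k => NNReal.coe_rpow c (1 / (k:ℝ))
    simp only [he, NNReal.coe_one]
    exact hreal
  have he2 : ∀ k : ℕ, ((c : ENNReal)) ^ (1 / (k:ℝ)) = ((c ^ (1 / (k:ℝ)) : NNReal) : ENNReal) :=
    fun k => (ENNReal.coe_rpow_of_ne_zero hcnn0 _).symm
  simp only [he2]
  rw [show (1 : ENNReal) = ((1 : NNReal) : ENNReal) by simp]
  exact ENNReal.tendsto_coe.mpr hnn

theorem specRad_le_specRad {α β : Type*} [Fintype α] [DecidableEq α] [Nonempty α]
    [Fintype β] [DecidableEq β] [Nonempty β]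
    {A : Matrix α α ℝ} {B : Matrix β β ℝ}
    (hApow : ∀ k, ∀ i j, 0 ≤ (A ^ k) i j) (hBpow : ∀ k, ∀ i j, 0 ≤ (B ^ k) i j)
    (C : ℝ) (hC : 1 ≤ C)
    (h : ∀ k, 1 ≤ k → eSum (A ^ k) ≤ C * eSum (B ^ k)) :
    specRad A ≤ specRad B := by
  classical
  haveI : CompleteSpace (Matrix α α ℂ) := FiniteDimensional.complete ℂ _
  haveI : CompleteSpace (Matrix β β ℂ) := FiniteDimensional.complete ℂ _
  set c : NNReal := C.toNNReal * (Fintype.card β) with hc_def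
  have hc1 : 1 ≤ c := by
    have h1 : (1:NNReal) ≤ C.toNNReal := by
      rw [← Real.toNNReal_one]
      exact Real.toNNReal_mono hC
    have h2 : (1:NNReal) ≤ (Fintype.card β : NNReal) := by
      have := Fintype.card_pos (α := β)
      exact_mod_cast this
    calc (1:NNReal) = 1 * 1 := by ring
    _ ≤ C.toNNReal * (Fintype.card β) := mul_le_mul' h1 h2
  have key : ∀ k : ℕ, 1 ≤ k →
      (‖(A.map (fun x : ℝ => (x : ℂ))) ^ k‖₊ : ENNReal)
        ≤ (c : ENNReal) * ‖(B.map (fun x : ℝ => (x : ℂ))) ^ k‖₊ := by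
    intro k hk
    rw [map_pow_comm A k, map_pow_comm B k, ← ENNReal.coe_mul, ENNReal.coe_le_coe]
    calc ‖(A ^ k).map (fun x : ℝ => (x : ℂ))‖₊ ≤ sNN (A ^ k) := nnnorm_map_le _
      _ ≤ C.toNNReal * sNN (B ^ k) := by
          rw [← NNReal.coe_le_coe]
          push_cast
          rw [coe_sNN (hApow k), coe_sNN (hBpow k), Real.coe_toNNReal _ (by linarith)]
          exact h k hk
      _ ≤ C.toNNReal * ((Fintype.card β) • ‖(B ^ k).map (fun x : ℝ => (x : ℂ))‖₊) :=
          mul_le_mul_right (sNN_le_card_nnnorm _) _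
      _ = c * ‖(B ^ k).map (fun x : ℝ => (x : ℂ))‖₊ := by
          rw [hc_def, nsmul_eq_mul, mul_assoc]
  have gA := spectrum.pow_nnnorm_pow_one_div_tendsto_nhds_spectralRadius
    (A.map (fun x : ℝ => (x : ℂ)))
  have gB := spectrum.pow_nnnorm_pow_one_div_tendsto_nhds_spectralRadius
    (B.map (fun x : ℝ => (x : ℂ)))
  have hmul : Filter.Tendsto
      (fun k : ℕ => (c : ENNReal) ^ (1 / (k:ℝ)) *
        (‖(B.map (fun x : ℝ => (x : ℂ))) ^ k‖₊ : ENNReal) ^ (1 / (k:ℝ)))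
      Filter.atTop (nhds (1 * specRad B)) := by
    refine ENNReal.Tendsto.mul (tendsto_c_rpow c hc1) (Or.inl one_ne_zero) gB ?_
    right; exact ENNReal.one_ne_top
  rw [one_mul] at hmul
  refine le_of_tendsto_of_tendsto gA hmul ?_
  filter_upwards [Filter.eventually_ge_atTop 1] with k hk
  have h1k : (0:ℝ) ≤ 1 / (k:ℝ) := by positivity
  calc (‖(A.map (fun x : ℝ => (x : ℂ))) ^ k‖₊ : ENNReal) ^ (1 / (k:ℝ))
      ≤ ((c : ENNReal) * ‖(B.map (fun x : ℝ => (x : ℂ))) ^ k‖₊) ^ (1 / (k:ℝ)) :=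
        ENNReal.rpow_le_rpow (key k hk) h1k
    _ = (c : ENNReal) ^ (1 / (k:ℝ)) *
        (‖(B.map (fun x : ℝ => (x : ℂ))) ^ k‖₊ : ENNReal) ^ (1 / (k:ℝ)) :=
        ENNReal.mul_rpow_of_nonneg _ _ h1k

/-! ### Specialization to `upMat` and `lowMat` -/

section Final

variable (x0 y0 len : ℝ) (N : ℕ) (S : ℝ × ℝ → ℝ)

lemma ofFn_eq_init {m : ℕ} (i : Fin (m + 2) → Fin N × Fin N) :
    List.ofFn i = List.ofFn (Fin.init i) ++ [i (Fin.last (m + 1))] := by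
  rw [List.ofFn_succ', List.concat_eq_append]
  rfl

lemma cond_init_tail {m : ℕ} (i : Fin (m + 2) → Fin N × Fin N) :
    ∀ k : Fin m, (Fin.init i) k.succ = (Fin.tail i) k.castSucc := by
  intro k
  show i k.succ.castSucc = i k.castSucc.succ
  rw [Fin.succ_castSucc]

lemma upMat_init_tail {m : ℕ} (i : Fin (m + 2) → Fin N × Fin N) :
    upMat x0 y0 len N S m (Fin.init i) (Fin.tail i)
      = supAbs S (cell x0 y0 len N (List.ofFn i)) := by
  unfold upMat
  rw [if_pos (cond_init_tail N i), ofFn_eq_init]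
  have : Fin.tail i (Fin.last m) = i (Fin.last (m + 1)) := by
    show i (Fin.last m).succ = _
    rw [Fin.succ_last]
  rw [this]

lemma lowMat_init_tail {m : ℕ} (i : Fin (m + 2) → Fin N × Fin N) :
    lowMat x0 y0 len N S m (Fin.init i) (Fin.tail i)
      = infAbs S (cell x0 y0 len N (List.ofFn i)) := by
  unfold lowMat
  rw [if_pos (cond_init_tail N i), ofFn_eq_init]
  have : Fin.tail i (Fin.last m) = i (Fin.last (m + 1)) := by
    show i (Fin.last m).succ = _
    rw [Fin.succ_last]
  rw [this]

lemma upMat_zero {m : ℕ} (q r : Fin (m + 1) → Fin N × Fin N)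
    (h : ¬ ∀ k : Fin m, q k.succ = r k.castSucc) : upMat x0 y0 len N S m q r = 0 := by
  unfold upMat; rw [if_neg h]

lemma lowMat_zero {m : ℕ} (q r : Fin (m + 1) → Fin N × Fin N)
    (h : ¬ ∀ k : Fin m, q k.succ = r k.castSucc) : lowMat x0 y0 len N S m q r = 0 := by
  unfold lowMat; rw [if_neg h]

end Final

/-- monotonicity of spectral radii of the vertical scaling matrices and
existence of the limits ρ_* ≤ ρ^* (here level n corresponds to m+1). -/
theorem specRad_monotone_and_limits (x0 y0 len : ℝ) (hlen : 0 < len) (N : ℕ) (hN : 2 ≤ N)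
    (S : ℝ × ℝ → ℝ) (hS : ContinuousOn S (sqD x0 y0 len))
    (hS1 : ∀ t ∈ sqD x0 y0 len, |S t| < 1) :
    (∀ m : ℕ,
      specRad (lowMat x0 y0 len N S m) ≤ specRad (lowMat x0 y0 len N S (m + 1)) ∧
      specRad (lowMat x0 y0 len N S (m + 1)) ≤ specRad (upMat x0 y0 len N S (m + 1)) ∧
      specRad (upMat x0 y0 len N S (m + 1)) ≤ specRad (upMat x0 y0 len N S m)) ∧
    ∃ rhoLow rhoUp : ENNReal,
      Filter.Tendsto (fun m : ℕ => specRad (lowMat x0 y0 len N S m)) Filter.atTop (nhds rhoLow) ∧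
      Filter.Tendsto (fun m : ℕ => specRad (upMat x0 y0 len N S m)) Filter.atTop (nhds rhoUp) ∧
      rhoLow ≤ rhoUp := by
  classical
  haveI : Nonempty (Fin N) := ⟨⟨0, by omega⟩⟩
  have hN1 : 1 ≤ N := by omega
  set G := (Fin N × Fin N) with hG
  set up : ∀ m : ℕ, Matrix (Fin (m+1) → G) (Fin (m+1) → G) ℝ :=
    fun m => upMat x0 y0 len N S m with hup
  set low : ∀ m : ℕ, Matrix (Fin (m+1) → G) (Fin (m+1) → G) ℝ :=
    fun m => lowMat x0 y0 len N S m with hlow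
  have hcellne : ∀ w : List G, (cell x0 y0 len N w).Nonempty := cell_nonempty hlen
  have hcellsub : ∀ w : List G, cell x0 y0 len N w ⊆ sqD x0 y0 len :=
    cell_subset_sqD hlen hN1
  -- nonnegativity
  have hup0 : ∀ m (i j : Fin (m+1) → G), 0 ≤ up m i j := by
    intro m i j
    show 0 ≤ upMat x0 y0 len N S m i j
    unfold upMat
    split_ifs
    · exact supAbs_nonneg hS1 (hcellne _) (hcellsub _)
    · exact le_refl 0
  have hlow0 : ∀ m (i j : Fin (m+1) → G), 0 ≤ low m i j := by
    intro m i j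
    show 0 ≤ lowMat x0 y0 len N S m i j
    unfold lowMat
    split_ifs
    · exact infAbs_nonneg (hcellne _)
    · exact le_refl 0
  have hlowle : ∀ m (i j : Fin (m+1) → G), low m i j ≤ up m i j := by
    intro m i j
    show lowMat x0 y0 len N S m i j ≤ upMat x0 y0 len N S m i j
    unfold lowMat upMat
    split_ifs
    · exact infAbs_le_supAbs hS1 (hcellne _) (hcellsub _)
    · exact le_refl 0
  have hB0up : ∀ m, ∀ q r, ¬ (∀ k : Fin m, q k.succ = r k.castSucc) → up m q r = 0 :=
    fun m => upMat_zero x0 y0 len N S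
  have hB0low : ∀ m, ∀ q r, ¬ (∀ k : Fin m, q k.succ = r k.castSucc) → low m q r = 0 :=
    fun m => lowMat_zero x0 y0 len N S
  -- key entrywise comparisons
  have keyUp : ∀ m (i j : Fin (m+2) → G),
      up (m+1) i j ≤ (PM m (up m) * EM G m) i j := by
    intro m i j
    rw [PM_mul_EM_apply]
    by_cases hc : ∀ k : Fin (m+1), i k.succ = j k.castSucc
    · have ht : Fin.tail i = Fin.init j := funext hc
      rw [if_pos ht]
      have hL : up (m+1) i j
          = supAbs S (cell x0 y0 len N (List.ofFn i ++ [j (Fin.last (m+1))])) := by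
        show upMat x0 y0 len N S (m+1) i j = _
        unfold upMat
        rw [if_pos hc]
      rw [hL]
      have hR := upMat_init_tail x0 y0 len N S i
      show _ ≤ upMat x0 y0 len N S m (Fin.init i) (Fin.tail i)
      rw [hR]
      exact supAbs_mono hS1 (hcellne _) (cell_append_singleton hlen hN1 _ _) (hcellsub _)
    · have hL : up (m+1) i j = 0 := hB0up (m+1) i j hc
      rw [hL]
      split_ifs
      · exact hup0 m _ _
      · exact le_refl 0
  have keyLow : ∀ m (i j : Fin (m+2) → G),
      (PM m (low m) * EM G m) i j ≤ low (m+1) i j := by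
    intro m i j
    rw [PM_mul_EM_apply]
    by_cases hc : ∀ k : Fin (m+1), i k.succ = j k.castSucc
    · have ht : Fin.tail i = Fin.init j := funext hc
      rw [if_pos ht]
      have hL : low (m+1) i j
          = infAbs S (cell x0 y0 len N (List.ofFn i ++ [j (Fin.last (m+1))])) := by
        show lowMat x0 y0 len N S (m+1) i j = _
        unfold lowMat
        rw [if_pos hc]
      rw [hL]
      have hR := lowMat_init_tail x0 y0 len N S i
      show lowMat x0 y0 len N S m (Fin.init i) (Fin.tail i) ≤ _
      rw [hR]
      exact infAbs_anti (hcellne _) (cell_append_singleton hlen hN1 _ _)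
    · have ht : ¬ (Fin.tail i = Fin.init j) := fun h => hc (fun k => congrFun h k)
      rw [if_neg ht]
      exact hlow0 (m+1) i j
  have cardG1 : (1:ℝ) ≤ (Fintype.card G : ℝ) := by
    have := Fintype.card_pos (α := G)
    exact_mod_cast this
  -- eSum comparisons
  have stepUp : ∀ m, ∀ k, 1 ≤ k →
      eSum (up (m+1) ^ k) ≤ (Fintype.card G : ℝ) * eSum (up m ^ k) := by
    intro m k hk
    obtain ⟨k', rfl⟩ : ∃ k', k = k' + 1 := ⟨k - 1, by omega⟩
    have h1 := pow_entry_le (hup0 (m+1)) (keyUp m) (k' + 1)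
    calc eSum (up (m+1) ^ (k'+1)) ≤ eSum ((PM m (up m) * EM G m) ^ (k'+1)) :=
          eSum_le_eSum h1.2
      _ = eSum (PM m (up m) * up m ^ k' * EM G m) := by rw [PME_pow m _ (hB0up m)]
      _ = (Fintype.card G : ℝ) * eSum (up m * up m ^ k') := eSum_PME m _ (hB0up m) _
      _ = (Fintype.card G : ℝ) * eSum (up m ^ (k'+1)) := by rw [← pow_succ']
  have stepLow : ∀ m, ∀ k, 1 ≤ k →
      eSum (low m ^ k) ≤ 1 * eSum (low (m+1) ^ k) := by
    intro m k hk
    obtain ⟨k', rfl⟩ : ∃ k', k = k' + 1 := ⟨k - 1, by omega⟩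
    have hPE0 : ∀ i j, 0 ≤ (PM m (low m) * EM G m) i j := by
      intro i j
      rw [PM_mul_EM_apply]
      split_ifs
      · exact hlow0 m _ _
      · exact le_refl 0
    have h2 := pow_entry_le hPE0 (keyLow m) (k' + 1)
    have hpos : 0 ≤ eSum (low m ^ (k'+1)) :=
      eSum_nonneg (pow_entry_le (hlow0 m) (fun i j => le_refl _) (k'+1)).1
    rw [one_mul]
    calc eSum (low m ^ (k'+1)) ≤ (Fintype.card G : ℝ) * eSum (low m ^ (k'+1)) := by
          nlinarith
      _ = (Fintype.card G : ℝ) * eSum (low m * low m ^ k') := by rw [← pow_succ']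
      _ = eSum (PM m (low m) * low m ^ k' * EM G m) := (eSum_PME m _ (hB0low m) _).symm
      _ = eSum ((PM m (low m) * EM G m) ^ (k'+1)) := by rw [PME_pow m _ (hB0low m)]
      _ ≤ eSum (low (m+1) ^ (k'+1)) := eSum_le_eSum h2.2
  have stepMid : ∀ m, ∀ k, 1 ≤ k →
      eSum (low m ^ k) ≤ 1 * eSum (up m ^ k) := by
    intro m k _
    rw [one_mul]
    exact eSum_le_eSum (pow_entry_le (hlow0 m) (hlowle m) k).2
  -- spectral radius inequalities
  have powup : ∀ m k, ∀ i j, 0 ≤ (up m ^ k) i j :=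
    fun m k => (pow_entry_le (hup0 m) (fun i j => le_refl _) k).1
  have powlow : ∀ m k, ∀ i j, 0 ≤ (low m ^ k) i j :=
    fun m k => (pow_entry_le (hlow0 m) (fun i j => le_refl _) k).1
  have ineq1 : ∀ m, specRad (low m) ≤ specRad (low (m+1)) := by
    intro m
    exact specRad_le_specRad (powlow m) (powlow (m+1)) 1 le_rfl (stepLow m)
  have ineq2 : ∀ m, specRad (low m) ≤ specRad (up m) := by
    intro m
    exact specRad_le_specRad (powlow m) (powup m) 1 le_rfl (stepMid m)
  have ineq3 : ∀ m, specRad (up (m+1)) ≤ specRad (up m) := by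
    intro m
    exact specRad_le_specRad (powup (m+1)) (powup m) (Fintype.card G : ℝ) cardG1 (stepUp m)
  refine ⟨fun m => ⟨ineq1 m, ineq2 (m+1), ineq3 m⟩, ?_⟩
  have lowMono : Monotone (fun m : ℕ => specRad (low m)) :=
    monotone_nat_of_le_succ ineq1
  have upAnti : Antitone (fun m : ℕ => specRad (up m)) :=
    antitone_nat_of_succ_le ineq3
  refine ⟨⨆ m, specRad (low m), ⨅ m, specRad (up m),
    tendsto_atTop_iSup lowMono, tendsto_atTop_iInf upAnti, ?_⟩
  refine iSup_le fun m => le_iInf fun k => ?_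
  calc specRad (low m) ≤ specRad (low (max m k)) := lowMono (le_max_left m k)
    _ ≤ specRad (up (max m k)) := ineq2 (max m k)
    _ ≤ specRad (up k) := upAnti (le_max_right m k)
end

section
/- Let B be a primitive nonnegative matrix indexed by a finite set, and suppose nonnegative vectors V_p satisfy V_{p+1} ≥ B V_p − N^{p+1} u for a fixed positive vector u and a constant N > 1. If limsup_p ‖V_p‖₁/N^p = +∞ along the natural filtration (as in Lemma 4.2 of the paper: specifically, limsup_p O_p(f,D)/N^p = +∞ where ‖V(f,n,p)‖₁ = O_{n+p}(f,D)), then for any vector 𝐯 there exists p₀ with V_{p₀} > N^{p₀} 𝐯 entrywise. -/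
def MatPrimitive {α : Type*} [Fintype α] [DecidableEq α] (A : Matrix α α ℝ) : Prop :=
  ∃ k : ℕ, 0 < k ∧ ∀ i j, 0 < (A ^ k) i j

/-!
Rescaling `W p = N⁻ᵖ • V p` turns the recurrence into `W (p + 1) ≥ (N⁻¹ • B) W p - u`.
Iterating it `k` times, where `B ^ k` is entrywise positive, gives
`W (p + k) ≥ δ ‖W p‖₁ - E` for some `δ > 0` and a vector `E` independent of `p`;
since `‖W p‖₁` is unbounded, the right-hand side eventually exceeds any given vector.
-/

open Filter Topology Matrix

namespace Matrix

variable {α R : Type*} [Fintype α]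

theorem mulVec_mono_of_nonneg [Semiring R] [PartialOrder R] [IsOrderedRing R]
    {A : Matrix α α R} (hA : ∀ i j, 0 ≤ A i j) {x y : α → R} (hxy : x ≤ y) :
    A *ᵥ x ≤ A *ᵥ y :=
  fun i => dotProduct_le_dotProduct_of_nonneg_left hxy (hA i)

theorem exists_pow_mulVec_sub_le_of_mulVec_sub_le [DecidableEq α] [Ring R] [PartialOrder R]
    [IsOrderedRing R] {A : Matrix α α R} (hA : ∀ i j, 0 ≤ A i j) {W : ℕ → α → R}
    {e : α → R} (hW : ∀ p, A *ᵥ W p - e ≤ W (p + 1)) (m : ℕ) :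
    ∃ E : α → R, ∀ p, A ^ m *ᵥ W p - E ≤ W (p + m) := by
  induction m with
  | zero => exact ⟨0, fun p => by simp⟩
  | succ m ih =>
    obtain ⟨E, hE⟩ := ih
    refine ⟨A *ᵥ E + e, fun p => ?_⟩
    calc A ^ (m + 1) *ᵥ W p - (A *ᵥ E + e) = A *ᵥ (A ^ m *ᵥ W p - E) - e := by
          rw [pow_succ', ← mulVec_mulVec, mulVec_sub, sub_sub]
      _ ≤ A *ᵥ W (p + m) - e := sub_le_sub_right (mulVec_mono_of_nonneg hA (hE p)) e
      _ ≤ W (p + (m + 1)) := hW (p + m)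

theorem exists_pos_mul_sum_le_mulVec {P : Matrix α α ℝ} (hP : ∀ i j, 0 < P i j) :
    ∃ δ > 0, ∀ x : α → ℝ, 0 ≤ x → ∀ i, δ * ∑ j, x j ≤ (P *ᵥ x) i := by
  have hsmall : ∀ᶠ δ in 𝓝[>] (0 : ℝ), ∀ i j, δ ≤ P i j :=
    eventually_all.2 fun i => eventually_all.2 fun j =>
      (eventually_le_nhds (hP i j)).filter_mono nhdsWithin_le_nhds
  obtain ⟨δ, hδ, hδP⟩ := (eventually_mem_nhdsWithin.and hsmall).exists
  refine ⟨δ, hδ, fun x hx i => ?_⟩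
  rw [Finset.mul_sum]
  exact Finset.sum_le_sum fun j _ => mul_le_mul_of_nonneg_right (hδP i j) (hx j)

end Matrix

theorem inv_pow_smul_mulVec_sub_le {α : Type*} [Fintype α] {B : Matrix α α ℝ} {u : α → ℝ}
    {N : ℝ} (hN : 0 < N) {V : ℕ → α → ℝ}
    (hrec : ∀ p i, (B *ᵥ V p) i - N ^ (p + 1) * u i ≤ V (p + 1) i) (p : ℕ) :
    (N⁻¹ • B) *ᵥ ((N ^ p)⁻¹ • V p) - u ≤ (N ^ (p + 1))⁻¹ • V (p + 1) := by
  intro i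
  simp only [smul_mulVec, mulVec_smul, Pi.sub_apply, Pi.smul_apply, smul_eq_mul]
  rw [← mul_assoc, ← mul_inv, ← pow_succ, le_inv_mul_iff₀ (pow_pos hN _), mul_sub,
    mul_inv_cancel_left₀ (pow_pos hN _).ne']
  exact hrec p i

theorem eventually_dominates_general {α : Type*} [Fintype α] [DecidableEq α]
    (B : Matrix α α ℝ) (hB : ∀ i j, 0 ≤ B i j) (hprim : MatPrimitive B)
    (u : α → ℝ) (N : ℝ) (hN : 1 < N)
    (V : ℕ → α → ℝ) (hVpos : ∀ p i, 0 ≤ V p i)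
    (hrec : ∀ p i, B.mulVec (V p) i - N ^ (p + 1) * u i ≤ V (p + 1) i)
    (hunb : ∀ C : ℝ, ∃ᶠ p in Filter.atTop, C < (∑ i, |V p i|) / N ^ p) :
    ∀ v : α → ℝ, ∃ p0 : ℕ, ∀ i, N ^ p0 * v i < V p0 i := by
  intro v
  have hN0 : 0 < N := zero_lt_one.trans hN
  have hA : ∀ i j, 0 ≤ (N⁻¹ • B) i j := fun i j => mul_nonneg (inv_nonneg.2 hN0.le) (hB i j)
  obtain ⟨k, -, hk⟩ := hprim
  obtain ⟨E, hE⟩ :=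
    exists_pow_mulVec_sub_le_of_mulVec_sub_le hA (inv_pow_smul_mulVec_sub_le hN0 hrec) k
  obtain ⟨δ, hδ, hlow⟩ := exists_pos_mul_sum_le_mulVec (P := (N⁻¹ • B) ^ k) fun i j => by
    rw [smul_pow]; exact mul_pos (pow_pos (inv_pos.2 hN0) k) (hk i j)
  obtain ⟨C, hC⟩ : ∃ C, ∀ i, v i + E i < δ * C :=
    (eventually_all.2 fun i =>
      (tendsto_id.const_mul_atTop hδ).eventually_gt_atTop (v i + E i)).exists
  obtain ⟨p, hp⟩ := (hunb C).exists
  have hWp : 0 ≤ (N ^ p)⁻¹ • V p := fun j => mul_nonneg (by positivity) (hVpos p j)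
  have hsum : ∑ j, ((N ^ p)⁻¹ • V p) j = (∑ j, |V p j|) / N ^ p := by
    simp [abs_of_nonneg (hVpos p _), Finset.mul_sum, div_eq_inv_mul]
  refine ⟨p + k, fun i => (lt_inv_mul_iff₀ (pow_pos hN0 _)).1 ?_⟩
  calc v i < δ * C - E i := by linarith [hC i]
    _ ≤ δ * ∑ j, ((N ^ p)⁻¹ • V p) j - E i := by rw [hsum]; gcongr
    _ ≤ ((N⁻¹ • B) ^ k *ᵥ (N ^ p)⁻¹ • V p) i - E i := by gcongr; exact hlow _ hWp i
    _ ≤ (N ^ (p + k))⁻¹ * V (p + k) i := hE p i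

/-- abstract form of Lemma 4.2: if B is primitive, the nonnegative vectors
V_p satisfy V_{p+1} ≥ B V_p − N^{p+1} u and ‖V_p‖₁/N^p is unbounded, then for any vector v
there is p₀ with V_{p₀} > N^{p₀} v entrywise. -/
theorem eventually_dominates {α : Type*} [Fintype α] [DecidableEq α]
    (B : Matrix α α ℝ) (hB : ∀ i j, 0 ≤ B i j) (hprim : MatPrimitive B)
    (u : α → ℝ) (hu : ∀ i, 0 < u i) (N : ℝ) (hN : 1 < N)
    (V : ℕ → α → ℝ) (hVpos : ∀ p i, 0 ≤ V p i)
    (hrec : ∀ p i, B.mulVec (V p) i - N ^ (p + 1) * u i ≤ V (p + 1) i)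
    (hunb : ∀ C : ℝ, ∃ᶠ p in Filter.atTop, C < (∑ i, |V p i|) / N ^ p) :
    ∀ v : α → ℝ, ∃ p0 : ℕ, ∀ i, N ^ p0 * v i < V p0 i :=
  eventually_dominates_general B hB hprim u N hN V hVpos hrec hunb
end

section
/- Let the IFS Ψ_w(x,y,z) = (u_i(x), v_j(y), S(L_w(x,y))(z − g(x,y)) + h(L_w(x,y))) for w = (i,j) ∈ Σ be given, where |S| < 1 on D, g interpolates the corner data and h interpolates all data. Then there exists a unique continuous function f: D → ℝ with f(x_i, y_j) = z_{ij} for all 0 ≤ i ≤ N, 0 ≤ j ≤ M, whose graph Γf satisfies Γf = ⋃_{w∈Σ} Ψ_w(Γf). -/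
open scoped Classical
section AuxFold
open Set

lemma affine_mem_Icc (a b p q s : ℝ) (hs : s ∈ Icc p q) :
    a * s + b ∈ Icc (min (a*p+b) (a*q+b)) (max (a*p+b) (a*q+b)) := by
  rcases le_total 0 a with ha | ha
  · have h1 : a*p+b ≤ a*s+b := by nlinarith [hs.1]
    have h2 : a*s+b ≤ a*q+b := by nlinarith [hs.2]
    exact ⟨le_trans (min_le_left _ _) h1, le_trans h2 (le_max_right _ _)⟩
  · have h1 : a*q+b ≤ a*s+b := by nlinarith [hs.2]
    have h2 : a*s+b ≤ a*p+b := by nlinarith [hs.1]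
    exact ⟨le_trans (min_le_right _ _) h1, le_trans h2 (le_max_left _ _)⟩

lemma continuousOn_paste {α β : Type*} [TopologicalSpace α] [TopologicalSpace β]
    {f : α → β} {s t : Set α} (hs : IsClosed s) (ht : IsClosed t)
    (hf : ContinuousOn f s) (hg : ContinuousOn f t) : ContinuousOn f (s ∪ t) := by
  intro p hp
  apply ContinuousWithinAt.union
  · by_cases h : p ∈ s
    · exact hf p h
    · exact continuousWithinAt_of_notMem_closure (by rwa [hs.closure_eq])
  · by_cases h : p ∈ t
    · exact hg p h
    · exact continuousWithinAt_of_notMem_closure (by rwa [ht.closure_eq])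

lemma exists_fold {N : ℕ} (hN : 1 ≤ N) (x : Fin (N + 1) → ℝ) (hx : StrictMono x)
    (u : Fin N → ℝ → ℝ)
    (hu : ∀ i, ∃ a b : ℝ, ∀ t, u i t = a * t + b)
    (hu0 : ∀ i : Fin N, i.val % 2 = 0 →
      u i (x 0) = x i.castSucc ∧ u i (x (Fin.last N)) = x i.succ)
    (hu1 : ∀ i : Fin N, i.val % 2 = 1 →
      u i (x 0) = x i.succ ∧ u i (x (Fin.last N)) = x i.castSucc) :
    ∃ ex : ℝ → ℝ,
      ContinuousOn ex (Icc (x 0) (x (Fin.last N))) ∧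
      (∀ X ∈ Icc (x 0) (x (Fin.last N)), ex X ∈ Icc (x 0) (x (Fin.last N))) ∧
      (∀ i : Fin N, ∀ s ∈ Icc (x 0) (x (Fin.last N)),
        u i s ∈ Icc (x i.castSucc) (x i.succ)) ∧
      (∀ i : Fin N, ∀ s ∈ Icc (x 0) (x (Fin.last N)), ex (u i s) = s) ∧
      (∀ X ∈ Icc (x 0) (x (Fin.last N)), ∃ i : Fin N, u i (ex X) = X) ∧
      (∀ k : Fin (N + 1), ex (x k) = x 0 ∨ ex (x k) = x (Fin.last N)) := by
  have h0le : (0 : Fin (N+1)) ≤ Fin.last N := Fin.zero_le _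
  have hcs : ∀ i : Fin N, x i.castSucc < x i.succ :=
    fun i => hx (Fin.castSucc_lt_succ : i.castSucc < i.succ)
  have h0last : x 0 ≤ x (Fin.last N) := hx.monotone h0le
  choose a b hab using hu
  have ha : ∀ i, a i ≠ 0 := by
    intro i hai
    have hne : x i.castSucc ≠ x i.succ := ne_of_lt (hcs i)
    rcases Nat.mod_two_eq_zero_or_one i.val with hp | hp
    · have h1 := (hu0 i hp).1
      have h2 := (hu0 i hp).2
      rw [hab, hai] at h1 h2
      exact hne (by linarith)
    · have h1 := (hu1 i hp).1
      have h2 := (hu1 i hp).2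
      rw [hab, hai] at h1 h2
      exact hne (by linarith)
  set w : Fin N → ℝ → ℝ := fun i t => (t - b i) / (a i) with hw
  have hwu : ∀ i t, w i (u i t) = t := by
    intro i t
    have hai : a i ≠ 0 := ha i
    rw [hab]
    simp only [hw]
    field_simp
    ring
  have huw : ∀ i t, u i (w i t) = t := by
    intro i t
    have hai : a i ≠ 0 := ha i
    rw [hab]
    simp only [hw]
    field_simp
    ring
  have hwaff : ∀ i t, w i t = (a i)⁻¹ * t + (-(b i) / (a i)) := by
    intro i t
    have hai : a i ≠ 0 := ha i
    simp only [hw]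
    field_simp
    ring
  -- endpoint values
  have hw0 : ∀ i : Fin N, i.val % 2 = 0 →
      w i (x i.castSucc) = x 0 ∧ w i (x i.succ) = x (Fin.last N) := by
    intro i hp
    constructor
    · rw [← (hu0 i hp).1, hwu]
    · rw [← (hu0 i hp).2, hwu]
  have hw1 : ∀ i : Fin N, i.val % 2 = 1 →
      w i (x i.castSucc) = x (Fin.last N) ∧ w i (x i.succ) = x 0 := by
    intro i hp
    constructor
    · rw [← (hu1 i hp).2, hwu]
    · rw [← (hu1 i hp).1, hwu]
  -- matching at interior nodes
  have hmatch : ∀ i j : Fin N, j.val = i.val + 1 → w i (x i.succ) = w j (x i.succ) := by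
    intro i j hij
    have hcsq : j.castSucc = i.succ := by
      apply Fin.ext
      simp [hij]
    rcases Nat.mod_two_eq_zero_or_one i.val with hp | hp
    · have hpj : j.val % 2 = 1 := by omega
      rw [(hw0 i hp).2, ← hcsq, (hw1 j hpj).1]
    · have hpj : j.val % 2 = 0 := by omega
      rw [(hw1 i hp).2, ← hcsq, (hw0 j hpj).1]
  -- u maps I into tile i
  have htile : ∀ i : Fin N, ∀ s ∈ Icc (x 0) (x (Fin.last N)),
      u i s ∈ Icc (x i.castSucc) (x i.succ) := by
    intro i s hs
    have := affine_mem_Icc (a i) (b i) (x 0) (x (Fin.last N)) s hs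
    rw [← hab, ← hab, ← hab] at this
    rcases Nat.mod_two_eq_zero_or_one i.val with hp | hp
    · rw [(hu0 i hp).1, (hu0 i hp).2, min_eq_left (hcs i).le, max_eq_right (hcs i).le] at this
      exact this
    · rw [(hu1 i hp).1, (hu1 i hp).2, min_eq_right (hcs i).le, max_eq_left (hcs i).le] at this
      exact this
  -- w maps tile i into I
  have hwtile : ∀ i : Fin N, ∀ X ∈ Icc (x i.castSucc) (x i.succ),
      w i X ∈ Icc (x 0) (x (Fin.last N)) := by
    intro i X hX
    have := affine_mem_Icc ((a i)⁻¹) (-(b i) / (a i)) (x i.castSucc) (x i.succ) X hX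
    rw [← hwaff, ← hwaff, ← hwaff] at this
    rcases Nat.mod_two_eq_zero_or_one i.val with hp | hp
    · rw [(hw0 i hp).1, (hw0 i hp).2, min_eq_left h0last, max_eq_right h0last] at this
      exact this
    · rw [(hw1 i hp).1, (hw1 i hp).2, min_eq_right h0last, max_eq_left h0last] at this
      exact this
  -- index function
  set idx : ℝ → Fin N := fun X =>
    if hxe : ∃ i : Fin N, x i.castSucc ≤ X then
      (Finset.univ.filter fun i : Fin N => x i.castSucc ≤ X).max'
        ⟨hxe.choose, Finset.mem_filter.2 ⟨Finset.mem_univ _, hxe.choose_spec⟩⟩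
    else ⟨0, by omega⟩ with hidxdef
  have hidx : ∀ X : ℝ, (∃ i : Fin N, x i.castSucc ≤ X) →
      x (idx X).castSucc ≤ X ∧ ∀ i : Fin N, x i.castSucc ≤ X → i ≤ idx X := by
    intro X hxe
    rw [hidxdef]
    simp only [dif_pos hxe]
    constructor
    · have := Finset.max'_mem (Finset.univ.filter fun i : Fin N => x i.castSucc ≤ X)
        ⟨hxe.choose, Finset.mem_filter.2 ⟨Finset.mem_univ _, hxe.choose_spec⟩⟩
      exact (Finset.mem_filter.1 this).2
    · intro i hi
      exact Finset.le_max' _ i (Finset.mem_filter.2 ⟨Finset.mem_univ _, hi⟩)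
  set ex : ℝ → ℝ := fun X => w (idx X) X with hexdef
  -- key: on tile i, ex agrees with w i
  have hkey0 : ∀ i : Fin N, ∀ X ∈ Icc (x i.castSucc) (x i.succ), w (idx X) X = w i X := by
    intro i X hX
    have hxe : ∃ i' : Fin N, x i'.castSucc ≤ X := ⟨i, hX.1⟩
    obtain ⟨hj1, hj2⟩ := hidx X hxe
    have hij : i ≤ idx X := hj2 i hX.1
    rcases eq_or_lt_of_le hij with heq | hlt
    · rw [heq]
    · have hsle : x i.succ ≤ x (idx X).castSucc := by
        apply hx.monotone
        have hv := Fin.lt_def.mp hlt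
        rw [Fin.le_def, Fin.val_succ, Fin.coe_castSucc]
        omega
      have hXeq : X = x i.succ := le_antisymm hX.2 (le_trans hsle hj1)
      have hXeq2 : x i.succ = x (idx X).castSucc := le_antisymm hsle (hXeq ▸ hj1)
      have hjval : (idx X).val = i.val + 1 := by
        have h1 := hx.injective hXeq2
        have h2 := congrArg Fin.val h1
        rw [Fin.val_succ, Fin.coe_castSucc] at h2
        exact h2.symm
      calc w (idx X) X = w (idx X) (x i.succ) := congrArg (w (idx X)) hXeq
        _ = w i (x i.succ) := (hmatch i (idx X) hjval).symm
        _ = w i X := congrArg (w i) hXeq.symm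
  have hkey : ∀ i : Fin N, ∀ X ∈ Icc (x i.castSucc) (x i.succ), ex X = w i X :=
    fun i X hX => hkey0 i X hX
  -- coverage by tiles
  have hcover : ∀ X ∈ Icc (x 0) (x (Fin.last N)),
      X ∈ Icc (x (idx X).castSucc) (x (idx X).succ) := by
    intro X hX
    have h00 : x (⟨0, by omega⟩ : Fin N).castSucc ≤ X := by
      have : (⟨0, by omega⟩ : Fin N).castSucc = (0 : Fin (N+1)) := rfl
      rw [this]; exact hX.1
    have hxe : ∃ i : Fin N, x i.castSucc ≤ X := ⟨⟨0, by omega⟩, h00⟩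
    obtain ⟨hj1, hj2⟩ := hidx X hxe
    refine ⟨hj1, ?_⟩
    by_contra hcon
    push_neg at hcon
    by_cases hlt : (idx X).val + 1 < N
    · have hle := hj2 ⟨(idx X).val + 1, hlt⟩ (by
        have : x (⟨(idx X).val + 1, hlt⟩ : Fin N).castSucc = x (idx X).succ := by
          congr 1
        rw [this]; exact hcon.le)
      rw [Fin.le_def] at hle
      simp at hle
    · have : (idx X).succ = Fin.last N := by
        apply Fin.ext
        simp [Fin.val_last]
        omega
      rw [this] at hcon
      exact absurd hX.2 (not_le.2 hcon)
  refine ⟨ex, ?_, ?_, htile, ?_, ?_, ?_⟩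
  · -- continuity
    have htc : ∀ i : Fin N, ContinuousOn ex (Icc (x i.castSucc) (x i.succ)) := by
      intro i
      have hwc : Continuous (w i) := by
        rw [hw]
        fun_prop
      exact hwc.continuousOn.congr (hkey i)
    have hind : ∀ k : Fin (N + 1), ContinuousOn ex (Icc (x 0) (x k)) := by
      intro k
      induction k using Fin.induction with
      | zero => rw [Set.Icc_self]; exact continuousOn_singleton ex (x 0)
      | succ i ih =>
        have hunion : Icc (x 0) (x i.castSucc) ∪ Icc (x i.castSucc) (x i.succ)
            = Icc (x 0) (x i.succ) :=
          Icc_union_Icc_eq_Icc (hx.monotone (Fin.zero_le _)) (hcs i).le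
        rw [← hunion]
        exact continuousOn_paste isClosed_Icc isClosed_Icc ih (htc i)
    exact hind (Fin.last N)
  · -- maps I into I
    intro X hX
    rw [hkey (idx X) X (hcover X hX)]
    exact hwtile _ _ (hcover X hX)
  · -- ex (u i s) = s
    intro i s hs
    rw [hkey i _ (htile i s hs), hwu]
  · -- coverage: some i with u i (ex X) = X
    intro X hX
    refine ⟨idx X, ?_⟩
    rw [hkey (idx X) X (hcover X hX), huw]
  · -- node values
    intro k
    by_cases hk : k.val < N
    · set i : Fin N := ⟨k.val, hk⟩
      have hxk : x k = x i.castSucc := by congr 1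
      have hmem : x k ∈ Icc (x i.castSucc) (x i.succ) := by
        rw [hxk]; exact ⟨le_refl _, (hcs i).le⟩
      rw [hxk] at hmem ⊢
      rw [hkey i _ hmem]
      rcases Nat.mod_two_eq_zero_or_one i.val with hp | hp
      · exact Or.inl (hw0 i hp).1
      · exact Or.inr (hw1 i hp).1
    · have hkN : k.val = N := by omega
      set i : Fin N := ⟨N - 1, by omega⟩
      have hxk : x k = x i.succ := by
        congr 1
        apply Fin.ext
        simp [i]
        omega
      have hmem : x k ∈ Icc (x i.castSucc) (x i.succ) := by
        rw [hxk]; exact ⟨(hcs i).le, le_refl _⟩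
      rw [hxk] at hmem ⊢
      rw [hkey i _ hmem]
      rcases Nat.mod_two_eq_zero_or_one i.val with hp | hp
      · exact Or.inr (hw0 i hp).2
      · exact Or.inl (hw1 i hp).2

end AuxFold

def graphOn (f : ℝ × ℝ → ℝ) (D : Set (ℝ × ℝ)) : Set (ℝ × ℝ × ℝ) :=
  {p | (p.1, p.2.1) ∈ D ∧ p.2.2 = f (p.1, p.2.1)}

/-- existence and uniqueness of the generalized affine fractal interpolation
function: a continuous f on D interpolating the data whose graph is invariant under the IFS
Ψ_w(x,y,z) = (u_i x, v_j y, S(L_w(x,y))(z − g(x,y)) + h(L_w(x,y))). -/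
theorem FIF_exists_unique (N M : ℕ) (hN : 2 ≤ N) (hM : 2 ≤ M)
    (x : Fin (N + 1) → ℝ) (y : Fin (M + 1) → ℝ) (hx : StrictMono x) (hy : StrictMono y)
    (z : Fin (N + 1) → Fin (M + 1) → ℝ)
    (u : Fin N → ℝ → ℝ) (v : Fin M → ℝ → ℝ)
    (hu : ∀ i, ∃ a b : ℝ, ∀ t, u i t = a * t + b)
    (hv : ∀ j, ∃ a b : ℝ, ∀ t, v j t = a * t + b)
    (hu0 : ∀ i : Fin N, i.val % 2 = 0 →
      u i (x 0) = x i.castSucc ∧ u i (x (Fin.last N)) = x i.succ)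
    (hu1 : ∀ i : Fin N, i.val % 2 = 1 →
      u i (x 0) = x i.succ ∧ u i (x (Fin.last N)) = x i.castSucc)
    (hv0 : ∀ j : Fin M, j.val % 2 = 0 →
      v j (y 0) = y j.castSucc ∧ v j (y (Fin.last M)) = y j.succ)
    (hv1 : ∀ j : Fin M, j.val % 2 = 1 →
      v j (y 0) = y j.succ ∧ v j (y (Fin.last M)) = y j.castSucc)
    (D : Set (ℝ × ℝ))
    (hD : D = Set.Icc (x 0) (x (Fin.last N)) ×ˢ Set.Icc (y 0) (y (Fin.last M)))
    (S g h : ℝ × ℝ → ℝ)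
    (hS : ContinuousOn S D) (hS1 : ∀ t ∈ D, |S t| < 1)
    (hg : ContinuousOn g D)
    (hgc : ∀ i : Fin (N + 1), ∀ j : Fin (M + 1),
      (i = 0 ∨ i = Fin.last N) → (j = 0 ∨ j = Fin.last M) → g (x i, y j) = z i j)
    (hh : ContinuousOn h D)
    (hhc : ∀ i j, h (x i, y j) = z i j) :
    ∃ f : ℝ × ℝ → ℝ,
      (ContinuousOn f D ∧ (∀ i j, f (x i, y j) = z i j) ∧
        graphOn f D = ⋃ w : Fin N × Fin M,
          (fun p : ℝ × ℝ × ℝ => (u w.1 p.1, v w.2 p.2.1,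
            S (u w.1 p.1, v w.2 p.2.1) * (p.2.2 - g (p.1, p.2.1))
              + h (u w.1 p.1, v w.2 p.2.1))) '' graphOn f D) ∧
      ∀ f' : ℝ × ℝ → ℝ,
        (ContinuousOn f' D ∧ (∀ i j, f' (x i, y j) = z i j) ∧
          graphOn f' D = ⋃ w : Fin N × Fin M,
            (fun p : ℝ × ℝ × ℝ => (u w.1 p.1, v w.2 p.2.1,
              S (u w.1 p.1, v w.2 p.2.1) * (p.2.2 - g (p.1, p.2.1))
                + h (u w.1 p.1, v w.2 p.2.1))) '' graphOn f' D) →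
        Set.EqOn f f' D := by
  obtain ⟨ex, hexc, hexmem, hutile, hexu, hexcov, hexnode⟩ :=
    exists_fold (by omega) x hx u hu hu0 hu1
  obtain ⟨ey, heyc, heymem, hvtile, heyv, heycov, heynode⟩ :=
    exists_fold (by omega) y hy v hv hv0 hv1
  subst hD
  set D : Set (ℝ × ℝ) := Set.Icc (x 0) (x (Fin.last N)) ×ˢ Set.Icc (y 0) (y (Fin.last M)) with hD
  have hmemD : ∀ p : ℝ × ℝ, p ∈ D ↔
      (p.1 ∈ Set.Icc (x 0) (x (Fin.last N)) ∧ p.2 ∈ Set.Icc (y 0) (y (Fin.last M))) :=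
    fun p => Set.mem_prod
  have hxmem : ∀ i : Fin (N+1), x i ∈ Set.Icc (x 0) (x (Fin.last N)) :=
    fun i => ⟨hx.monotone (Fin.zero_le _), hx.monotone (Fin.le_last _)⟩
  have hymem : ∀ j : Fin (M+1), y j ∈ Set.Icc (y 0) (y (Fin.last M)) :=
    fun j => ⟨hy.monotone (Fin.zero_le _), hy.monotone (Fin.le_last _)⟩
  have hgrid : ∀ (i : Fin (N+1)) (j : Fin (M+1)), (x i, y j) ∈ D :=
    fun i j => (hmemD _).2 ⟨hxmem i, hymem j⟩
  have hsubx : ∀ i : Fin N, Set.Icc (x i.castSucc) (x i.succ) ⊆ Set.Icc (x 0) (x (Fin.last N)) :=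
    fun i => Set.Icc_subset_Icc (hx.monotone (Fin.zero_le _)) (hx.monotone (Fin.le_last _))
  have hsuby : ∀ j : Fin M, Set.Icc (y j.castSucc) (y j.succ) ⊆ Set.Icc (y 0) (y (Fin.last M)) :=
    fun j => Set.Icc_subset_Icc (hy.monotone (Fin.zero_le _)) (hy.monotone (Fin.le_last _))
  have hDc : IsCompact D := isCompact_Icc.prod isCompact_Icc
  have hDne : D.Nonempty := ⟨(x 0, y 0), hgrid 0 0⟩
  obtain ⟨pS, hpSD, hpSmax⟩ := hDc.exists_isMaxOn hDne (continuous_abs.comp_continuousOn hS)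
  set s : ℝ := |S pS| with hsdef
  have hs0 : (0:ℝ) ≤ s := abs_nonneg _
  have hs1 : s < 1 := hS1 pS hpSD
  have hsb : ∀ p ∈ D, |S p| ≤ s := fun p hp => hpSmax hp
  set Ef : ℝ × ℝ → ℝ × ℝ := fun p => (ex p.1, ey p.2) with hEf
  have hED : ∀ p ∈ D, Ef p ∈ D := fun p hp =>
    (hmemD _).2 ⟨hexmem _ ((hmemD p).1 hp).1, heymem _ ((hmemD p).1 hp).2⟩
  haveI : CompactSpace ↥D := isCompact_iff_compactSpace.mp hDc
  have hE0c : Continuous (fun p : ↥D => (⟨Ef p.val, hED p.val p.prop⟩ : ↥D)) := by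
    apply Continuous.subtype_mk
    apply Continuous.prodMk
    · exact hexc.comp_continuous (continuous_fst.comp continuous_subtype_val)
        (fun p => ((hmemD p.val).1 p.prop).1)
    · exact heyc.comp_continuous (continuous_snd.comp continuous_subtype_val)
        (fun p => ((hmemD p.val).1 p.prop).2)
  set Ecm : C(↥D, ↥D) := ⟨_, hE0c⟩ with hEcm
  set Scm : C(↥D, ℝ) :=
    ⟨fun p => S p.val, hS.comp_continuous continuous_subtype_val (fun p => p.prop)⟩ with hScm
  set hcm : C(↥D, ℝ) :=
    ⟨fun p => h p.val, hh.comp_continuous continuous_subtype_val (fun p => p.prop)⟩ with hhcm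
  set gEcm : C(↥D, ℝ) :=
    ⟨fun p => g (Ef p.val),
      hg.comp_continuous (continuous_subtype_val.comp hE0c) (fun p => hED p.val p.prop)⟩
    with hgEcm
  set T : C(↥D, ℝ) → C(↥D, ℝ) := fun φ => Scm * (φ.comp Ecm - gEcm) + hcm with hTdef
  have hTapp : ∀ (φ : C(↥D, ℝ)) (p : ↥D),
      T φ p = S p.val * (φ ⟨Ef p.val, hED p.val p.prop⟩ - g (Ef p.val)) + h p.val :=
    fun φ p => rfl
  have hcontr : ContractingWith ⟨s, hs0⟩ T := by
    constructor
    · exact_mod_cast hs1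
    · apply LipschitzWith.of_dist_le_mul
      intro φ ψ
      show dist (T φ) (T ψ) ≤ s * dist φ ψ
      rw [ContinuousMap.dist_le (mul_nonneg hs0 dist_nonneg)]
      intro p
      have hdiff : T φ p - T ψ p =
          S p.val * (φ ⟨Ef p.val, hED p.val p.prop⟩ - ψ ⟨Ef p.val, hED p.val p.prop⟩) := by
        rw [hTapp, hTapp]; ring
      rw [Real.dist_eq, hdiff, abs_mul]
      have h1 : |φ ⟨Ef p.val, hED p.val p.prop⟩ - ψ ⟨Ef p.val, hED p.val p.prop⟩| ≤ dist φ ψ := by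
        rw [← Real.dist_eq]
        exact ContinuousMap.dist_apply_le_dist _
      exact mul_le_mul (hsb p.val p.prop) h1 (abs_nonneg _) hs0
  set F : C(↥D, ℝ) := ContractingWith.fixedPoint T hcontr with hF
  have hFfix : T F = F := hcontr.fixedPoint_isFixedPt
  set f : ℝ × ℝ → ℝ := fun p => if hp : p ∈ D then F ⟨p, hp⟩ else 0 with hf
  have hfval : ∀ (p : ℝ × ℝ) (hp : p ∈ D), f p = F ⟨p, hp⟩ := fun p hp => dif_pos hp
  have hfix : ∀ p ∈ D, f p = S p * (f (Ef p) - g (Ef p)) + h p := by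
    intro p hp
    rw [hfval p hp, ← hFfix, hTapp, hfval (Ef p) (hED p hp)]
  have hfc : ContinuousOn f D := by
    rw [continuousOn_iff_continuous_restrict]
    have hres : D.domRestrict f = fun p : ↥D => F p := funext fun p => dif_pos p.prop
    rw [hres]
    exact F.continuous
  -- corners
  have hcornD : ∀ X Y : ℝ, (X = x 0 ∨ X = x (Fin.last N)) →
      (Y = y 0 ∨ Y = y (Fin.last M)) → (X, Y) ∈ D := by
    rintro X Y (rfl | rfl) (rfl | rfl)
    exacts [hgrid 0 0, hgrid 0 (Fin.last M), hgrid (Fin.last N) 0, hgrid (Fin.last N) (Fin.last M)]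
  have hhg : ∀ X Y : ℝ, (X = x 0 ∨ X = x (Fin.last N)) →
      (Y = y 0 ∨ Y = y (Fin.last M)) → h (X, Y) = g (X, Y) := by
    rintro X Y (rfl | rfl) (rfl | rfl)
    · rw [hhc 0 0, hgc 0 0 (Or.inl rfl) (Or.inl rfl)]
    · rw [hhc 0 (Fin.last M), hgc 0 (Fin.last M) (Or.inl rfl) (Or.inr rfl)]
    · rw [hhc (Fin.last N) 0, hgc (Fin.last N) 0 (Or.inr rfl) (Or.inl rfl)]
    · rw [hhc (Fin.last N) (Fin.last M), hgc (Fin.last N) (Fin.last M) (Or.inr rfl) (Or.inr rfl)]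
  have hEc1 : ∀ X : ℝ, (X = x 0 ∨ X = x (Fin.last N)) →
      (ex X = x 0 ∨ ex X = x (Fin.last N)) := by
    rintro X (rfl | rfl)
    · exact hexnode 0
    · exact hexnode (Fin.last N)
  have hEc2 : ∀ Y : ℝ, (Y = y 0 ∨ Y = y (Fin.last M)) →
      (ey Y = y 0 ∨ ey Y = y (Fin.last M)) := by
    rintro Y (rfl | rfl)
    · exact heynode 0
    · exact heynode (Fin.last M)
  set m : ℝ := max
      (max |F ⟨(x 0, y 0), hgrid 0 0⟩ - g (x 0, y 0)|
           |F ⟨(x 0, y (Fin.last M)), hgrid 0 (Fin.last M)⟩ - g (x 0, y (Fin.last M))|)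
      (max |F ⟨(x (Fin.last N), y 0), hgrid (Fin.last N) 0⟩ - g (x (Fin.last N), y 0)|
           |F ⟨(x (Fin.last N), y (Fin.last M)), hgrid (Fin.last N) (Fin.last M)⟩
             - g (x (Fin.last N), y (Fin.last M))|) with hm
  have hcmax : ∀ q : ↥D, (q.val.1 = x 0 ∨ q.val.1 = x (Fin.last N)) →
      (q.val.2 = y 0 ∨ q.val.2 = y (Fin.last M)) → |F q - g q.val| ≤ m := by
    intro q hq1 hq2
    rcases hq1 with h1 | h1 <;> rcases hq2 with h2 | h2
    · have hqe : q = ⟨(x 0, y 0), hgrid 0 0⟩ := Subtype.ext (Prod.ext_iff.mpr ⟨h1, h2⟩)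
      rw [hqe]
      exact le_trans (le_max_left _ _) (le_max_left _ _)
    · have hqe : q = ⟨(x 0, y (Fin.last M)), hgrid 0 (Fin.last M)⟩ :=
        Subtype.ext (Prod.ext_iff.mpr ⟨h1, h2⟩)
      rw [hqe]
      exact le_trans (le_max_right _ _) (le_max_left _ _)
    · have hqe : q = ⟨(x (Fin.last N), y 0), hgrid (Fin.last N) 0⟩ :=
        Subtype.ext (Prod.ext_iff.mpr ⟨h1, h2⟩)
      rw [hqe]
      exact le_trans (le_max_left _ _) (le_max_right _ _)
    · have hqe : q = ⟨(x (Fin.last N), y (Fin.last M)), hgrid (Fin.last N) (Fin.last M)⟩ :=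
        Subtype.ext (Prod.ext_iff.mpr ⟨h1, h2⟩)
      rw [hqe]
      exact le_trans (le_max_right _ _) (le_max_right _ _)
  have hcstep : ∀ q : ↥D, (q.val.1 = x 0 ∨ q.val.1 = x (Fin.last N)) →
      (q.val.2 = y 0 ∨ q.val.2 = y (Fin.last M)) → |F q - g q.val| ≤ s * m := by
    intro q hq1 hq2
    have hq' : q.val = (q.val.1, q.val.2) := rfl
    have hFq : F q = S q.val * (F ⟨Ef q.val, hED q.val q.prop⟩ - g (Ef q.val)) + h q.val := by
      conv_lhs => rw [← hFfix]
      exact hTapp F q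
    have hhq : h q.val = g q.val := hhg q.val.1 q.val.2 hq1 hq2
    have heq : F q - g q.val = S q.val * (F ⟨Ef q.val, hED q.val q.prop⟩ - g (Ef q.val)) := by
      rw [hFq, hhq]; ring
    rw [heq, abs_mul]
    have hEcor := hcmax ⟨Ef q.val, hED q.val q.prop⟩ (hEc1 q.val.1 hq1) (hEc2 q.val.2 hq2)
    exact mul_le_mul (hsb q.val q.prop) hEcor (abs_nonneg _) hs0
  have hm0 : 0 ≤ m :=
    le_trans (abs_nonneg _) (le_trans (le_max_left _ _) (le_max_left _ _))
  have hmsm : m ≤ s * m := by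
    apply max_le <;> apply max_le
    · exact hcstep ⟨(x 0, y 0), hgrid 0 0⟩ (Or.inl rfl) (Or.inl rfl)
    · exact hcstep ⟨(x 0, y (Fin.last M)), hgrid 0 (Fin.last M)⟩ (Or.inl rfl) (Or.inr rfl)
    · exact hcstep ⟨(x (Fin.last N), y 0), hgrid (Fin.last N) 0⟩ (Or.inr rfl) (Or.inl rfl)
    · exact hcstep ⟨(x (Fin.last N), y (Fin.last M)), hgrid (Fin.last N) (Fin.last M)⟩
        (Or.inr rfl) (Or.inr rfl)
  have hmz : m ≤ 0 := by nlinarith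
  have hFcorner : ∀ q : ↥D, (q.val.1 = x 0 ∨ q.val.1 = x (Fin.last N)) →
      (q.val.2 = y 0 ∨ q.val.2 = y (Fin.last M)) → F q = g q.val := by
    intro q hq1 hq2
    have := hcmax q hq1 hq2
    have habs : |F q - g q.val| = 0 := le_antisymm (le_trans this hmz) (abs_nonneg _)
    have := abs_eq_zero.mp habs
    linarith [sub_eq_zero.mp this]
  -- interpolation
  have hinterp : ∀ (i : Fin (N+1)) (j : Fin (M+1)), f (x i, y j) = z i j := by
    intro i j
    have hp := hgrid i j
    rw [hfix _ hp]
    have hcor : f (Ef (x i, y j)) = g (Ef (x i, y j)) := by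
      rw [hfval (Ef (x i, y j)) (hED _ hp)]
      exact hFcorner ⟨Ef (x i, y j), hED _ hp⟩ (hexnode i) (heynode j)
    rw [hcor, sub_self, mul_zero, zero_add, hhc i j]
  -- graph equation for f
  have hgraph : graphOn f D = ⋃ w : Fin N × Fin M,
      (fun p : ℝ × ℝ × ℝ => (u w.1 p.1, v w.2 p.2.1,
        S (u w.1 p.1, v w.2 p.2.1) * (p.2.2 - g (p.1, p.2.1))
          + h (u w.1 p.1, v w.2 p.2.1))) '' graphOn f D := by
    ext p
    constructor
    · rintro ⟨hpD, hpv⟩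
      have hp1 : p.1 ∈ Set.Icc (x 0) (x (Fin.last N)) := ((hmemD _).1 hpD).1
      have hp2 : p.2.1 ∈ Set.Icc (y 0) (y (Fin.last M)) := ((hmemD _).1 hpD).2
      obtain ⟨i, hi⟩ := hexcov p.1 hp1
      obtain ⟨j, hj⟩ := heycov p.2.1 hp2
      apply Set.mem_iUnion.2
      refine ⟨(i, j), ⟨(ex p.1, ey p.2.1, f (ex p.1, ey p.2.1)), ⟨hED (p.1, p.2.1) hpD, rfl⟩, ?_⟩⟩
      show (u i (ex p.1), v j (ey p.2.1),
        S (u i (ex p.1), v j (ey p.2.1)) * (f (ex p.1, ey p.2.1) - g (ex p.1, ey p.2.1))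
          + h (u i (ex p.1), v j (ey p.2.1))) = p
      rw [hi, hj]
      have := (hfix (p.1, p.2.1) hpD).symm
      rw [show Ef (p.1, p.2.1) = (ex p.1, ey p.2.1) from rfl] at this
      rw [this, ← hpv]
    · intro hp
      rw [Set.mem_iUnion] at hp
      obtain ⟨⟨i, j⟩, q, hq, rfl⟩ := hp
      have hq1x : q.1 ∈ Set.Icc (x 0) (x (Fin.last N)) := ((hmemD _).1 hq.1).1
      have hq2y : q.2.1 ∈ Set.Icc (y 0) (y (Fin.last M)) := ((hmemD _).1 hq.1).2
      have hPD : (u i q.1, v j q.2.1) ∈ D :=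
        (hmemD _).2 ⟨hsubx i (hutile i q.1 hq1x), hsuby j (hvtile j q.2.1 hq2y)⟩
      refine ⟨hPD, ?_⟩
      show S (u i q.1, v j q.2.1) * (q.2.2 - g (q.1, q.2.1)) + h (u i q.1, v j q.2.1)
        = f (u i q.1, v j q.2.1)
      rw [hfix _ hPD]
      have hEfP : Ef (u i q.1, v j q.2.1) = (q.1, q.2.1) :=
        Prod.ext_iff.mpr ⟨hexu i q.1 hq1x, heyv j q.2.1 hq2y⟩
      rw [hEfP, ← hq.2]
  refine ⟨f, ⟨hfc, hinterp, hgraph⟩, ?_⟩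
  -- uniqueness
  rintro f' ⟨hf'c, hf'i, hf'g⟩
  have hfix' : ∀ p ∈ D, f' p = S p * (f' (Ef p) - g (Ef p)) + h p := by
    intro p hp
    have hmem3 : (p.1, p.2, f' p) ∈ graphOn f' D := ⟨hp, rfl⟩
    rw [hf'g, Set.mem_iUnion] at hmem3
    obtain ⟨⟨i, j⟩, q, hq, heq⟩ := hmem3
    have h1 : u i q.1 = p.1 := congrArg Prod.fst heq
    have h2 : v j q.2.1 = p.2 := congrArg (fun r : ℝ × ℝ × ℝ => r.2.1) heq
    have h3 : S (u i q.1, v j q.2.1) * (q.2.2 - g (q.1, q.2.1)) + h (u i q.1, v j q.2.1)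
        = f' p := congrArg (fun r : ℝ × ℝ × ℝ => r.2.2) heq
    have hq1x : q.1 ∈ Set.Icc (x 0) (x (Fin.last N)) := ((hmemD _).1 hq.1).1
    have hq2y : q.2.1 ∈ Set.Icc (y 0) (y (Fin.last M)) := ((hmemD _).1 hq.1).2
    have he1 : ex p.1 = q.1 := by rw [← h1]; exact hexu i q.1 hq1x
    have he2 : ey p.2 = q.2.1 := by rw [← h2]; exact heyv j q.2.1 hq2y
    have hEfp : Ef p = (q.1, q.2.1) := Prod.ext_iff.mpr ⟨he1, he2⟩
    have hP : (u i q.1, v j q.2.1) = p := by rw [h1, h2]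
    calc f' p = S (u i q.1, v j q.2.1) * (q.2.2 - g (q.1, q.2.1))
          + h (u i q.1, v j q.2.1) := h3.symm
      _ = S p * (f' (Ef p) - g (Ef p)) + h p := by rw [hP, hq.2, ← hEfp]
  set φ : ℝ × ℝ → ℝ := fun p => f p - f' p with hφ
  have hφc : ContinuousOn φ D := hfc.sub hf'c
  obtain ⟨p0, hp0D, hp0max⟩ := hDc.exists_isMaxOn hDne (continuous_abs.comp_continuousOn hφc)
  have hkey2 : ∀ p ∈ D, |φ p| ≤ s * |φ (Ef p)| := by
    intro p hp
    have e1 := hfix p hp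
    have e2 := hfix' p hp
    have hφe : φ p = S p * φ (Ef p) := by
      show f p - f' p = S p * (f (Ef p) - f' (Ef p))
      rw [e1, e2]; ring
    rw [hφe, abs_mul]
    exact mul_le_mul_of_nonneg_right (hsb p hp) (abs_nonneg _)
  have h0 : |φ p0| ≤ 0 := by
    have h1 := hkey2 p0 hp0D
    have h2 : |φ (Ef p0)| ≤ |φ p0| := hp0max (hED p0 hp0D)
    nlinarith [abs_nonneg (φ p0)]
  intro p hp
  have hle : |φ p| ≤ 0 := le_trans (hp0max hp) h0
  have : φ p = 0 := abs_eq_zero.mp (le_antisymm hle (abs_nonneg _))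
  have := sub_eq_zero.mp this
  exact this
end
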